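/- arXiv:0712.0152 — 5 statements merged into one kernel-verified Lean document; each statement's English description precedes it below -/
import Mathlib

section
/- Let n ≥ 1, let a < t be real numbers, let 0 < α ≤ 1, let L : ℝ × ℝⁿ × ℝⁿ → ℝ be of class C², and let q : ℝ → ℝⁿ be of class C² on [a,t]. Suppose that for every C² function h : ℝ → ℝⁿ with h(a) = 0 and h(t) = 0, the function ε ↦ (1/Γ(α)) ∫_a^t L(θ, q(θ) + ε·h(θ), q'(θ) + ε·h'(θ)) · (t−θ)^{α−1} dθ has derivative 0 at ε = 0. Then for every θ ∈ (a, t): ∂₂L(θ, q(θ), q'(θ)) − (d/dθ)[∂₃L(θ, q(θ), q'(θ))] = ((1−α)/(t−θ)) · ∂₃L(θ, q(θ), q'(θ)). -/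
/-!
Write `w θ = (t - θ) ^ (α - 1)`, which is integrable on `(a, t)` and smooth and positive inside.
Differentiating under the integral sign, stationarity says that
`∫ (⟪∂₂L, h⟫ + ⟪∂₃L, h'⟫) w = 0` for every test function `h` supported in `(a, t)`.
Integrating by parts turns this into `∫ ⟪w ∂₂L - (w ∂₃L)', h⟫ = 0`, so by the fundamental lemma of
the calculus of variations `w ∂₂L = (w ∂₃L)' = w (∂₃L)' + w' ∂₃L` on `(a, t)`. Dividing by `w`
and using `w' / w = (1 - α) / (t - θ)` gives the equation.
-/

open scoped RealInnerProductSpace Interval ContDiff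
open MeasureTheory Set Metric intervalIntegral

section FirstVariation

variable {X : Type*} [NormedAddCommGroup X] [NormedSpace ℝ X]

theorem hasDerivAt_intervalIntegral_comp_add_smul_mul {L : X → ℝ} (hL : ContDiff ℝ 1 L)
    {γ η : ℝ → X} {w : ℝ → ℝ} {a b : ℝ} (hγ : ContinuousOn γ [[a, b]])
    (hη : ContinuousOn η [[a, b]]) (hw : IntervalIntegrable w volume a b) :
    HasDerivAt (fun ε : ℝ => ∫ s in a..b, L (γ s + ε • η s) * w s)
      (∫ s in a..b, fderiv ℝ L (γ s) (η s) * w s) 0 := by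
  have hline : ∀ ε : ℝ, ContinuousOn (fun s => γ s + ε • η s) [[a, b]] := fun ε =>
    hγ.add (hη.const_smul ε)
  have hF : ∀ ε : ℝ, IntervalIntegrable (fun s => L (γ s + ε • η s) * w s) volume a b :=
    fun ε => hw.continuousOn_mul (hL.continuous.comp_continuousOn (hline ε))
  have hF' : IntervalIntegrable (fun s => fderiv ℝ L (γ s + (0 : ℝ) • η s) (η s) * w s)
      volume a b :=
    hw.continuousOn_mul
      (((hL.continuous_fderiv one_ne_zero).comp_continuousOn (hline 0)).clm_apply hη)
  have hsnd : MapsTo Prod.snd (closedBall (0 : ℝ) 1 ×ˢ [[a, b]]) [[a, b]] := fun _ hp => hp.2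
  obtain ⟨C, hC⟩ :=
    ((isCompact_closedBall (0 : ℝ) 1).prod isCompact_uIcc).exists_bound_of_continuousOn
      (f := fun p : ℝ × ℝ => fderiv ℝ L (γ p.2 + p.1 • η p.2) (η p.2))
      (((hL.continuous_fderiv one_ne_zero).comp_continuousOn
        ((hγ.comp continuousOn_snd hsnd).add
          (continuousOn_fst.smul (hη.comp continuousOn_snd hsnd)))).clm_apply
        (hη.comp continuousOn_snd hsnd))
  have h_bound : ∀ᵐ s ∂volume, s ∈ Ι a b → ∀ ε ∈ ball (0 : ℝ) 1,
      ‖fderiv ℝ L (γ s + ε • η s) (η s) * w s‖ ≤ C * ‖w s‖ := by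
    refine Filter.Eventually.of_forall fun s hs ε hε => ?_
    rw [norm_mul]
    exact mul_le_mul_of_nonneg_right
      (hC (ε, s) ⟨ball_subset_closedBall hε, uIoc_subset_uIcc hs⟩) (norm_nonneg _)
  have h_diff : ∀ᵐ s ∂volume, s ∈ Ι a b → ∀ ε ∈ ball (0 : ℝ) 1,
      HasDerivAt (fun e => L (γ s + e • η s) * w s)
        (fderiv ℝ L (γ s + ε • η s) (η s) * w s) ε := by
    refine Filter.Eventually.of_forall fun s _ ε _ => ?_
    have hline_deriv : HasDerivAt (fun e : ℝ => γ s + e • η s) (η s) ε := by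
      simpa using ((hasDerivAt_id ε).smul_const (η s)).const_add (γ s)
    exact ((hL.differentiable one_ne_zero _).hasFDerivAt.comp_hasDerivAt ε hline_deriv).mul_const _
  obtain ⟨-, hderiv⟩ := hasDerivAt_integral_of_dominated_loc_of_deriv_le (ball_mem_nhds 0 one_pos)
    (Filter.Eventually.of_forall fun ε => (hF ε).def'.aestronglyMeasurable) (hF 0)
    hF'.def'.aestronglyMeasurable h_bound (hw.norm.const_mul C) h_diff
  simpa only [zero_smul, add_zero] using hderiv

theorem ContDiffOn.prodMk_id_deriv {q : ℝ → X} {U : Set ℝ} (hq : ContDiffOn ℝ 2 q U)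
    (hU : IsOpen U) : ContDiffOn ℝ 1 (fun s => (s, q s, deriv q s)) U :=
  contDiffOn_id.prodMk ((hq.of_le one_le_two).prodMk (hq.deriv_of_isOpen hU le_rfl))

end FirstVariation

section PartialGradients

variable {E : Type*} [NormedAddCommGroup E] [InnerProductSpace ℝ E] [CompleteSpace E]
  {L : ℝ × E × E → ℝ}

open ContinuousLinearMap InnerProductSpace

theorem gradient_comp_mk_snd {s : ℝ} {x d : E} (hL : DifferentiableAt ℝ L (s, x, d)) :
    gradient (fun y => L (s, y, d)) x
      = (toDual ℝ E).symm ((fderiv ℝ L (s, x, d)).comp ((inr ℝ ℝ (E × E)).comp (inl ℝ E E))) :=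
  (hL.hasFDerivAt.comp x ((hasFDerivAt_prodMk_right s (x, d)).comp x
    (hasFDerivAt_prodMk_left x d))).hasGradientAt.gradient

theorem gradient_comp_mk_thd {s : ℝ} {x d : E} (hL : DifferentiableAt ℝ L (s, x, d)) :
    gradient (fun v => L (s, x, v)) d
      = (toDual ℝ E).symm ((fderiv ℝ L (s, x, d)).comp ((inr ℝ ℝ (E × E)).comp (inr ℝ E E))) :=
  (hL.hasFDerivAt.comp d ((hasFDerivAt_prodMk_right s (x, d)).comp d
    (hasFDerivAt_prodMk_right x d))).hasGradientAt.gradient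

theorem fderiv_apply_zero_fst {s : ℝ} {x d : E} (hL : DifferentiableAt ℝ L (s, x, d)) (u u' : E) :
    fderiv ℝ L (s, x, d) (0, u, u')
      = ⟪gradient (fun y => L (s, y, d)) x, u⟫ + ⟪gradient (fun v => L (s, x, v)) d, u'⟫ := by
  rw [gradient_comp_mk_snd hL, gradient_comp_mk_thd hL, toDual_symm_apply, toDual_symm_apply]
  simp [← map_add]

theorem ContDiffOn.toDual_symm_fderiv_comp {m n : WithTop ℕ∞} (hL : ContDiff ℝ n L)
    (hmn : m + 1 ≤ n) {γ : ℝ → ℝ × E × E} {U : Set ℝ} (hγ : ContDiffOn ℝ m γ U)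
    (c : E →L[ℝ] ℝ × E × E) :
    ContDiffOn ℝ m (fun s => (toDual ℝ E).symm ((fderiv ℝ L (γ s)).comp c)) U :=
  (toDual ℝ E).symm.toContinuousLinearEquiv.contDiff.comp_contDiffOn
    (((hL.fderiv_right hmn).comp_contDiffOn hγ).clm_comp contDiffOn_const)

variable {q : ℝ → E} {U : Set ℝ}

theorem contDiffOn_gradient_comp_mk_snd (hL : ContDiff ℝ 2 L) (hq : ContDiffOn ℝ 2 q U)
    (hU : IsOpen U) : ContDiffOn ℝ 1 (fun s => gradient (fun y => L (s, y, deriv q s)) (q s)) U :=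
  ((hq.prodMk_id_deriv hU).toDual_symm_fderiv_comp hL le_rfl _).congr fun _ _ =>
    gradient_comp_mk_snd (hL.differentiable two_ne_zero _)

theorem contDiffOn_gradient_comp_mk_thd (hL : ContDiff ℝ 2 L) (hq : ContDiffOn ℝ 2 q U)
    (hU : IsOpen U) : ContDiffOn ℝ 1 (fun s => gradient (fun v => L (s, q s, v)) (deriv q s)) U :=
  ((hq.prodMk_id_deriv hU).toDual_symm_fderiv_comp hL le_rfl _).congr fun _ _ =>
    gradient_comp_mk_thd (hL.differentiable two_ne_zero _)

theorem hasDerivAt_intervalIntegral_lagrangian_add_smul (hL : ContDiff ℝ 1 L) {a t : ℝ}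
    (hat : a < t) (hq : ContDiffOn ℝ 1 q (Icc a t)) {w : ℝ → ℝ}
    (hw : IntervalIntegrable w volume a t) {h : ℝ → E} (hh : ContDiff ℝ 1 h) :
    HasDerivAt (fun ε : ℝ => ∫ θ in a..t, L (θ, q θ + ε • h θ, deriv q θ + ε • deriv h θ) * w θ)
      (∫ θ in a..t, (⟪gradient (fun y => L (θ, y, deriv q θ)) (q θ), h θ⟫
        + ⟪gradient (fun v => L (θ, q θ, v)) (deriv q θ), deriv h θ⟫) * w θ) 0 := by
  -- on `[a, t]` only the one-sided derivative of `q` is continuous; it agrees with `deriv q` inside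
  have hq' : EqOn (derivWithin q (Icc a t)) (deriv q) (uIoo a t) := fun s hs => by
    rw [uIoo_of_le hat.le] at hs
    exact derivWithin_of_mem_nhds (Icc_mem_nhds hs.1 hs.2)
  have hvar := hasDerivAt_intervalIntegral_comp_add_smul_mul hL
    (γ := fun θ => (θ, q θ, derivWithin q (Icc a t) θ)) (η := fun θ => (0, h θ, deriv h θ))
    (by
      rw [uIcc_of_le hat.le]
      exact continuousOn_id.prodMk
        (hq.continuousOn.prodMk (hq.continuousOn_derivWithin (uniqueDiffOn_Icc hat) le_rfl)))
    (continuous_const.prodMk (hh.continuous.prodMk (hh.continuous_deriv le_rfl))).continuousOn hw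
  convert hvar using 1
  · funext ε
    exact integral_congr_uIoo fun θ hθ => by simp [hq' hθ]
  · exact integral_congr_uIoo fun θ hθ => by
      simp only [hq' hθ, fderiv_apply_zero_fst (hL.differentiable one_ne_zero _)]

end PartialGradients

theorem hasDerivAt_sub_rpow (t p : ℝ) {s : ℝ} (hs : s < t) :
    HasDerivAt (fun s => (t - s) ^ p) (-p / (t - s) * (t - s) ^ p) s := by
  have hts : 0 < t - s := sub_pos.mpr hs
  refine ((Real.hasDerivAt_rpow_const (p := p) (Or.inl hts.ne')).comp s
    ((hasDerivAt_id s).const_sub t)).congr_deriv ?_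
  rw [Real.rpow_sub_one hts.ne']
  field_simp

theorem intervalIntegrable_sub_rpow (t : ℝ) {p : ℝ} (hp : -1 < p) (a b : ℝ) :
    IntervalIntegrable (fun s => (t - s) ^ p) volume a b := by
  simpa using (intervalIntegrable_rpow' hp (a := t - a) (b := t - b)).comp_sub_left t

section IntegrationByParts

variable {E : Type*} [NormedAddCommGroup E] [InnerProductSpace ℝ E]

theorem integrable_inner_of_tsupport_subset {U : Set ℝ} (hU : IsOpen U) {f g : ℝ → E}
    (hf : ContinuousOn f U) (hg : Continuous g) (hgc : HasCompactSupport g) (hgU : tsupport g ⊆ U) :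
    Integrable (fun s => ⟪f s, g s⟫) := by
  have hsupp : Function.support (fun s => ⟪f s, g s⟫) ⊆ Function.support g :=
    Function.support_subset_iff'.mpr fun s hs => by simp [Function.notMem_support.mp hs]
  exact ((hf.inner hg.continuousOn).continuous_of_tsupport_subset hU
    ((closure_mono hsupp).trans hgU)).integrable_of_hasCompactSupport (hgc.mono hsupp)

theorem integral_inner_deriv_eq_neg {U : Set ℝ} (hU : IsOpen U) {P h : ℝ → E}
    (hP : ContDiffOn ℝ 1 P U) (hh : ContDiff ℝ 1 h) (hhc : HasCompactSupport h)
    (hhU : tsupport h ⊆ U) :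
    ∫ s, ⟪P s, deriv h s⟫ = -∫ s, ⟪deriv P s, h s⟫ := by
  have hP' : ContinuousOn (deriv P) U := hP.continuousOn_deriv_of_isOpen hU le_rfl
  have h₁ := integrable_inner_of_tsupport_subset hU hP' hh.continuous hhc hhU
  have h₂ := integrable_inner_of_tsupport_subset hU hP.continuousOn (hh.continuous_deriv le_rfl)
    hhc.deriv (tsupport_deriv_subset.trans hhU)
  have hderiv : ∀ s, HasDerivAt (fun s => ⟪P s, h s⟫) (⟪P s, deriv h s⟫ + ⟪deriv P s, h s⟫) s := by
    intro s
    by_cases hs : s ∈ tsupport h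
    · exact ((hP.differentiableOn one_ne_zero).differentiableAt
        (hU.mem_nhds (hhU hs))).hasDerivAt.inner ℝ ((hh.differentiable one_ne_zero) s).hasDerivAt
    · have hs' : s ∉ tsupport (deriv h) := fun h' => hs (tsupport_deriv_subset h')
      rw [image_eq_zero_of_notMem_tsupport hs, image_eq_zero_of_notMem_tsupport hs',
        inner_zero_right, inner_zero_right, zero_add]
      refine (hasDerivAt_const s (0 : ℝ)).congr_of_eventuallyEq ?_
      filter_upwards [notMem_tsupport_iff_eventuallyEq.mp hs] with r hr
      simp [hr]
  have := integral_eq_zero_of_hasDerivAt_of_integrable hderiv (h₂.add h₁)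
    (integrable_inner_of_tsupport_subset hU hP.continuousOn hh.continuous hhc hhU)
  rw [integral_add h₂ h₁] at this
  linarith

theorem integral_inner_sub_deriv_eq {U : Set ℝ} (hU : IsOpen U) {A P h : ℝ → E}
    (hA : ContinuousOn A U) (hP : ContDiffOn ℝ 1 P U) (hh : ContDiff ℝ 1 h)
    (hhc : HasCompactSupport h) (hhU : tsupport h ⊆ U) :
    ∫ s, ⟪A s - deriv P s, h s⟫ = ∫ s, (⟪A s, h s⟫ + ⟪P s, deriv h s⟫) := by
  have hA' := integrable_inner_of_tsupport_subset hU hA hh.continuous hhc hhU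
  have hP' := integrable_inner_of_tsupport_subset hU (hP.continuousOn_deriv_of_isOpen hU le_rfl)
    hh.continuous hhc hhU
  have hPh' := integrable_inner_of_tsupport_subset hU hP.continuousOn
    (hh.continuous_deriv le_rfl) hhc.deriv (tsupport_deriv_subset.trans hhU)
  simp only [inner_sub_left]
  rw [integral_sub hA' hP', integral_add hA' hPh', integral_inner_deriv_eq_neg hU hP hh hhc hhU,
    ← sub_eq_add_neg]

end IntegrationByParts

theorem IsOpen.eqOn_zero_of_integral_inner_eq_zero {E F : Type*} [NormedAddCommGroup E]
    [NormedSpace ℝ E] [FiniteDimensional ℝ E] [MeasurableSpace E] [BorelSpace E]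
    [NormedAddCommGroup F] [InnerProductSpace ℝ F] {μ : Measure E} [IsLocallyFiniteMeasure μ]
    [μ.IsOpenPosMeasure] {U : Set E} (hU : IsOpen U) {G : E → F} (hG : ContinuousOn G U)
    (hint : ∀ h : E → F, ContDiff ℝ ∞ h → HasCompactSupport h → tsupport h ⊆ U →
      ∫ x, ⟪G x, h x⟫ ∂μ = 0) :
    EqOn G 0 U := by
  have hcomp : ∀ v : F, EqOn (fun x => ⟪G x, v⟫) 0 U := fun v => by
    have hae := hU.ae_eq_zero_of_integral_contDiff_smul_eq_zero
      ((hG.inner continuousOn_const).locallyIntegrableOn hU.measurableSet) fun g hg hgc hgU => by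
        have := hint (fun x => g x • v) (hg.smul contDiff_const) hgc.smul_right
          ((tsupport_smul_subset_left _ _).trans hgU)
        simp only [real_inner_smul_right] at this
        exact this
    exact Measure.eqOn_open_of_ae_eq ((ae_restrict_iff' hU.measurableSet).mpr hae) hU
      (hG.inner continuousOn_const) continuousOn_const
  exact fun x hx => inner_self_eq_zero.mp (hcomp (G x) hx)

section EulerLagrange

variable {E : Type*} [NormedAddCommGroup E] [InnerProductSpace ℝ E] [CompleteSpace E]

theorem eqOn_weighted_euler_lagrange {L : ℝ × E × E → ℝ} (hL : ContDiff ℝ 2 L) {a t : ℝ}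
    (hat : a < t) {q : ℝ → E} (hq : ContDiffOn ℝ 2 q (Icc a t)) {w : ℝ → ℝ}
    (hw : ContDiffOn ℝ 1 w (Ioo a t)) (hwi : IntervalIntegrable w volume a t)
    (hstat : ∀ h : ℝ → E, ContDiff ℝ 2 h → h a = 0 → h t = 0 →
      HasDerivAt (fun ε : ℝ =>
        ∫ θ in a..t, L (θ, q θ + ε • h θ, deriv q θ + ε • deriv h θ) * w θ) 0 0) :
    EqOn (fun s => w s • gradient (fun y => L (s, y, deriv q s)) (q s)
        - deriv (fun s => w s • gradient (fun v => L (s, q s, v)) (deriv q s)) s) 0 (Ioo a t) := by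
  set g₂ := fun s => gradient (fun y => L (s, y, deriv q s)) (q s)
  set g₃ := fun s => gradient (fun v => L (s, q s, v)) (deriv q s)
  have hqIoo : ContDiffOn ℝ 2 q (Ioo a t) := hq.mono Ioo_subset_Icc_self
  have hwg₂ : ContinuousOn (fun s => w s • g₂ s) (Ioo a t) :=
    hw.continuousOn.smul (contDiffOn_gradient_comp_mk_snd hL hqIoo isOpen_Ioo).continuousOn
  have hwg₃ : ContDiffOn ℝ 1 (fun s => w s • g₃ s) (Ioo a t) :=
    hw.smul (contDiffOn_gradient_comp_mk_thd hL hqIoo isOpen_Ioo)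
  refine isOpen_Ioo.eqOn_zero_of_integral_inner_eq_zero (μ := volume)
    (hwg₂.sub (hwg₃.continuousOn_deriv_of_isOpen isOpen_Ioo le_rfl)) fun h hh hhc hhU => ?_
  have hh₂ : ContDiff ℝ 2 h := hh.of_le ENat.LEInfty.out
  have hvar := (hasDerivAt_intervalIntegral_lagrangian_add_smul (hL.of_le one_le_two) hat
    (hq.of_le one_le_two) hwi (hh₂.of_le one_le_two)).unique
    (hstat h hh₂ (image_eq_zero_of_notMem_tsupport fun ha => (hhU ha).1.false)
      (image_eq_zero_of_notMem_tsupport fun ht => (hhU ht).2.false))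
  have hsupp : Function.support (fun θ => (⟪g₂ θ, h θ⟫ + ⟪g₃ θ, deriv h θ⟫) * w θ) ⊆ Ioc a t := by
    refine (Function.support_subset_iff'.mpr fun s hs => ?_).trans (hhU.trans Ioo_subset_Ioc_self)
    simp [image_eq_zero_of_notMem_tsupport hs,
      Function.notMem_support.mp fun hs' => hs (support_deriv_subset hs')]
  calc ∫ s, ⟪w s • g₂ s - deriv (fun s => w s • g₃ s) s, h s⟫
      = ∫ s, (⟪w s • g₂ s, h s⟫ + ⟪w s • g₃ s, deriv h s⟫) :=
        integral_inner_sub_deriv_eq isOpen_Ioo hwg₂ hwg₃ (hh₂.of_le one_le_two) hhc hhU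
    _ = ∫ θ, (⟪g₂ θ, h θ⟫ + ⟪g₃ θ, deriv h θ⟫) * w θ := by
        simp only [real_inner_smul_left, add_mul, mul_comm (w _)]
    _ = ∫ θ in a..t, (⟪g₂ θ, h θ⟫ + ⟪g₃ θ, deriv h θ⟫) * w θ :=
        (integral_eq_integral_of_support_subset hsupp).symm
    _ = 0 := hvar

end EulerLagrange

theorem falva_first_order_euler_lagrange_general
    (n : ℕ) (a t α : ℝ) (hα0 : 0 < α)
    (L : ℝ × EuclideanSpace ℝ (Fin n) × EuclideanSpace ℝ (Fin n) → ℝ)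
    (hL : ContDiff ℝ 2 L)
    (q : ℝ → EuclideanSpace ℝ (Fin n))
    (hq : ContDiffOn ℝ 2 q (Set.Icc a t))
    (hstat : ∀ h : ℝ → EuclideanSpace ℝ (Fin n),
      ContDiff ℝ 2 h → h a = 0 → h t = 0 →
      HasDerivAt (fun ε : ℝ => (1 / Real.Gamma α) *
          ∫ θ in a..t,
            L (θ, q θ + ε • h θ, deriv q θ + ε • deriv h θ) * (t - θ) ^ (α - 1))
        0 0) :
    ∀ θ ∈ Set.Ioo a t,
      gradient (fun y => L (θ, y, deriv q θ)) (q θ)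
          - deriv (fun s => gradient (fun v => L (s, q s, v)) (deriv q s)) θ
        = ((1 - α) / (t - θ)) • gradient (fun v => L (θ, q θ, v)) (deriv q θ) := by
  intro θ hθ
  set w : ℝ → ℝ := fun s => (t - s) ^ (α - 1)
  set g₃ := fun s => gradient (fun v => L (s, q s, v)) (deriv q s)
  have hΓ : Real.Gamma α ≠ 0 := (Real.Gamma_pos_of_pos hα0).ne'
  have hEL := eqOn_weighted_euler_lagrange hL (hθ.1.trans hθ.2) hq (w := w)
    ((contDiffOn_const.sub contDiffOn_id).rpow_const_of_ne fun s hs => (sub_pos.mpr hs.2).ne')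
    (intervalIntegrable_sub_rpow t (by linarith) a t) fun h hh ha ht => by
      simpa [hΓ] using (hstat h hh ha ht).const_mul (Real.Gamma α)
  have hw : HasDerivAt w ((1 - α) / (t - θ) * w θ) θ := by
    simpa only [neg_sub] using hasDerivAt_sub_rpow t (α - 1) hθ.2
  have hg₃ : HasDerivAt g₃ (deriv g₃ θ) θ :=
    (((contDiffOn_gradient_comp_mk_thd hL (hq.mono Ioo_subset_Icc_self) isOpen_Ioo).differentiableOn
      one_ne_zero).differentiableAt (isOpen_Ioo.mem_nhds hθ)).hasDerivAt
  have hELθ : w θ • gradient (fun y => L (θ, y, deriv q θ)) (q θ)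
      - (w θ • deriv g₃ θ + ((1 - α) / (t - θ) * w θ) • g₃ θ) = 0 := by
    rw [← (hw.smul hg₃).deriv]
    exact hEL hθ
  refine smul_right_injective _ (Real.rpow_pos_of_pos (sub_pos.mpr hθ.2) (α - 1)).ne' ?_
  linear_combination (norm := module) hELθ

/-- **Euler–Lagrange equations for first-order FALVA problems.**
If `q` gives a stationary value to the FALVA functional
`I[q] = (1/Γ(α)) ∫_a^t L(θ, q(θ), q'(θ)) (t-θ)^(α-1) dθ`
(in the sense that the first variation vanishes for every `C²` variation `h`
vanishing at `a` and `t`), then `q` satisfies the FALVA Euler–Lagrange equation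
`∂₂L - d/dθ ∂₃L = ((1-α)/(t-θ)) ∂₃L` on `(a, t)`. -/
theorem falva_first_order_euler_lagrange
    (n : ℕ) (hn : 1 ≤ n) (a t α : ℝ) (hat : a < t) (hα0 : 0 < α) (hα1 : α ≤ 1)
    (L : ℝ × EuclideanSpace ℝ (Fin n) × EuclideanSpace ℝ (Fin n) → ℝ)
    (hL : ContDiff ℝ 2 L)
    (q : ℝ → EuclideanSpace ℝ (Fin n))
    (hq : ContDiffOn ℝ 2 q (Set.Icc a t))
    (hstat : ∀ h : ℝ → EuclideanSpace ℝ (Fin n),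
      ContDiff ℝ 2 h → h a = 0 → h t = 0 →
      HasDerivAt (fun ε : ℝ => (1 / Real.Gamma α) *
          ∫ θ in a..t,
            L (θ, q θ + ε • h θ, deriv q θ + ε • deriv h θ) * (t - θ) ^ (α - 1))
        0 0) :
    ∀ θ ∈ Set.Ioo a t,
      gradient (fun y => L (θ, y, deriv q θ)) (q θ)
          - deriv (fun s => gradient (fun v => L (s, q s, v)) (deriv q s)) θ
        = ((1 - α) / (t - θ)) • gradient (fun v => L (θ, q θ, v)) (deriv q θ) :=
  falva_first_order_euler_lagrange_general n a t α hα0 L hL q hq hstat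
end

section
/- Let n ≥ 1, let a < t be real numbers, let 0 < α ≤ 1, let L : ℝ × ℝⁿ × ℝⁿ → ℝ be of class C², and let q : ℝ → ℝⁿ be of class C² on [a,t]. Then for every C² function h : ℝ → ℝⁿ with h(a) = 0 and h(t) = 0, the derivative at ε = 0 of ε ↦ (1/Γ(α)) ∫_a^t L(θ, q(θ) + ε·h(θ), q'(θ) + ε·h'(θ)) (t−θ)^{α−1} dθ equals (1/Γ(α)) ∫_a^t ⟨ ∂₂L(θ, q(θ), q'(θ)) − (d/dθ)[∂₃L(θ, q(θ), q'(θ))] − ((1−α)/(t−θ)) ∂₃L(θ, q(θ), q'(θ)), h(θ) ⟩ (t−θ)^{α−1} dθ. -/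
/-!
Differentiating under the integral sign gives the first variation
`∫ (⟪∂₂L, h⟫ + ⟪∂₃L, h'⟫) w` with `w θ = (t - θ) ^ (α - 1)`: everything but the weight is bounded
on the compact interval, and `w` is integrable because `α > 0`. The term in `h'` is moved onto
`∂₃L` by the fundamental theorem of calculus for `⟪∂₃L, h⟫ w`, whose derivative is
`(⟪∂₃L, h'⟫ + ⟪(∂₃L)', h⟫ + (1 - α) / (t - θ) * ⟪∂₃L, h⟫) w`. Since `h t = 0`, `‖h θ‖ ≤ C (t - θ)`:
this makes the singular term integrable and `⟪∂₃L, h⟫ w = O((t - θ) ^ α)` vanish at `t`, while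
`h a = 0` kills the other boundary term. As `q` is `C²` only on `[a, t]`, `q'` is replaced by its
derivative within `[a, t]`, which agrees with `deriv q` on `(a, t)`.
-/

open scoped RealInnerProductSpace
open MeasureTheory Set Filter Topology InnerProductSpace

lemma intervalIntegrable_const_sub_rpow {r : ℝ} (hr : -1 < r) (a t : ℝ) :
    IntervalIntegrable (fun θ => (t - θ) ^ r) volume a t := by
  simpa using
    (intervalIntegral.intervalIntegrable_rpow' (a := t - a) (b := t - t) hr).comp_sub_left t

lemma hasDerivAt_const_sub_rpow (r : ℝ) {t θ : ℝ} (hθ : θ ≠ t) :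
    HasDerivAt (fun θ => (t - θ) ^ r) (-r / (t - θ) * (t - θ) ^ r) θ := by
  have hne : t - θ ≠ 0 := sub_ne_zero.mpr hθ.symm
  have h := (Real.hasDerivAt_rpow_const (p := r) (Or.inl hne)).comp θ
    ((hasDerivAt_id θ).const_sub t)
  refine h.congr_deriv ?_
  rw [Real.rpow_sub_one hne]
  field_simp

lemma deriv_eq_derivWithin_Icc_of_eqOn {F : Type*} [NormedAddCommGroup F] [NormedSpace ℝ F]
    {f g : ℝ → F} {a b θ : ℝ} (hfg : EqOn f g (Ioo a b)) (hθ : θ ∈ Ioo a b) :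
    deriv f θ = derivWithin g (Icc a b) θ := by
  rw [(eventuallyEq_of_mem (Ioo_mem_nhds hθ.1 hθ.2) hfg).deriv_eq,
    derivWithin_of_mem_nhds (Icc_mem_nhds hθ.1 hθ.2)]

lemma deriv_eq_derivWithin_Icc {F : Type*} [NormedAddCommGroup F] [NormedSpace ℝ F]
    {f : ℝ → F} {a b θ : ℝ} (hθ : θ ∈ Ioo a b) : deriv f θ = derivWithin f (Icc a b) θ :=
  deriv_eq_derivWithin_Icc_of_eqOn (fun _ _ => rfl) hθ

theorem hasDerivAt_integral_comp_add_smul_mul {X : Type*} [NormedAddCommGroup X] [NormedSpace ℝ X]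
    {L : X → ℝ} (hL : ContDiff ℝ 1 L) {γ δ : ℝ → X} {w : ℝ → ℝ} {a b : ℝ}
    (hγ : ContinuousOn γ (uIcc a b)) (hδ : ContinuousOn δ (uIcc a b))
    (hw : IntervalIntegrable w volume a b) :
    HasDerivAt (fun ε : ℝ => ∫ θ in a..b, L (γ θ + ε • δ θ) * w θ)
      (∫ θ in a..b, fderiv ℝ L (γ θ) (δ θ) * w θ) 0 := by
  have hpath : ContinuousOn (fun p : ℝ × ℝ => γ p.1 + p.2 • δ p.1) (uIcc a b ×ˢ univ) :=
    (hγ.comp continuousOn_fst fun p hp => hp.1).add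
      (continuousOn_snd.smul (hδ.comp continuousOn_fst fun p hp => hp.1))
  set K := (fun p : ℝ × ℝ => γ p.1 + p.2 • δ p.1) '' (uIcc a b ×ˢ Metric.closedBall 0 1)
  have hK : IsCompact K := (isCompact_uIcc.prod (isCompact_closedBall 0 1)).image_of_continuousOn
    (hpath.mono (prod_mono_right (subset_univ _)))
  obtain ⟨C, hC⟩ := hK.exists_bound_of_continuousOn (hL.continuous_fderiv one_ne_zero).continuousOn
  obtain ⟨D, hD⟩ := isCompact_uIcc.exists_bound_of_continuousOn hδ
  have hint : ∀ ε : ℝ, IntervalIntegrable (fun θ => L (γ θ + ε • δ θ) * w θ) volume a b := fun ε =>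
    hw.continuousOn_mul (hL.continuous.comp_continuousOn
      (hpath.comp (continuousOn_id.prodMk continuousOn_const) fun θ hθ => ⟨hθ, mem_univ ε⟩))
  have hint_deriv : IntervalIntegrable (fun θ => fderiv ℝ L (γ θ) (δ θ) * w θ) volume a b :=
    hw.continuousOn_mul (((hL.continuous_fderiv one_ne_zero).comp_continuousOn hγ).clm_apply hδ)
  have hdominated := intervalIntegral.hasDerivAt_integral_of_dominated_loc_of_deriv_le
    (F' := fun ε θ => fderiv ℝ L (γ θ + ε • δ θ) (δ θ) * w θ) (bound := fun θ => C * D * ‖w θ‖)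
    (Metric.ball_mem_nhds (0 : ℝ) one_pos)
    (Eventually.of_forall fun ε => (hint ε).def'.aestronglyMeasurable) (hint 0)
    (by simpa using hint_deriv.def'.aestronglyMeasurable) ?_ (hw.norm.const_mul _) ?_
  · simpa using hdominated.2
  · refine ae_of_all _ fun θ hθ ε hε => ?_
    have hθ' : θ ∈ uIcc a b := uIoc_subset_uIcc hθ
    have hεK : γ θ + ε • δ θ ∈ K := ⟨(θ, ε), ⟨hθ', Metric.ball_subset_closedBall hε⟩, rfl⟩
    rw [norm_mul]
    refine mul_le_mul_of_nonneg_right ?_ (norm_nonneg (w θ))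
    exact ((fderiv ℝ L _).le_opNorm _).trans
      (mul_le_mul (hC _ hεK) (hD θ hθ') (norm_nonneg _) ((norm_nonneg _).trans (hC _ hεK)))
  · refine ae_of_all _ fun θ _ ε _ => ?_
    have hline : HasDerivAt (fun ε : ℝ => γ θ + ε • δ θ) (δ θ) ε := by
      simpa using ((hasDerivAt_id ε).smul_const (δ θ)).const_add (γ θ)
    exact ((hL.differentiable one_ne_zero _).hasFDerivAt.comp_hasDerivAt ε hline).mul_const (w θ)

noncomputable section PartialGradient

variable {E : Type*} [NormedAddCommGroup E] [InnerProductSpace ℝ E] [CompleteSpace E]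

def partialGrad₂ (L : ℝ × E × E → ℝ) (p : ℝ × E × E) : E :=
  gradient (fun y => L (p.1, y, p.2.2)) p.2.1

def partialGrad₃ (L : ℝ × E × E → ℝ) (p : ℝ × E × E) : E :=
  gradient (fun v => L (p.1, p.2.1, v)) p.2.2

variable {L : ℝ × E × E → ℝ}

lemma partialGrad₂_eq {p : ℝ × E × E} (hL : DifferentiableAt ℝ L p) :
    partialGrad₂ L p = (toDual ℝ E).symm
      ((fderiv ℝ L p).comp ((ContinuousLinearMap.inr ℝ ℝ (E × E)).comp
        (ContinuousLinearMap.inl ℝ E E))) := by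
  have hι := (hasFDerivAt_prodMk_right p.1 (p.2.1, p.2.2)).comp p.2.1
    (hasFDerivAt_prodMk_left (𝕜 := ℝ) p.2.1 p.2.2)
  exact congrArg _ (hL.hasFDerivAt.comp p.2.1 hι).fderiv

lemma partialGrad₃_eq {p : ℝ × E × E} (hL : DifferentiableAt ℝ L p) :
    partialGrad₃ L p = (toDual ℝ E).symm
      ((fderiv ℝ L p).comp ((ContinuousLinearMap.inr ℝ ℝ (E × E)).comp
        (ContinuousLinearMap.inr ℝ E E))) := by
  have hι := (hasFDerivAt_prodMk_right p.1 (p.2.1, p.2.2)).comp p.2.2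
    (hasFDerivAt_prodMk_right (𝕜 := ℝ) p.2.1 p.2.2)
  exact congrArg _ (hL.hasFDerivAt.comp p.2.2 hι).fderiv

lemma inner_partialGrad₂_add_inner_partialGrad₃ {p : ℝ × E × E} (hL : DifferentiableAt ℝ L p)
    (x y : E) : ⟪partialGrad₂ L p, x⟫ + ⟪partialGrad₃ L p, y⟫ = fderiv ℝ L p (0, x, y) := by
  rw [partialGrad₂_eq hL, partialGrad₃_eq hL, toDual_symm_apply, toDual_symm_apply]
  simp only [ContinuousLinearMap.comp_apply, ← map_add]
  simp

lemma contDiff_partialGrad₂ {m n : WithTop ℕ∞} (hL : ContDiff ℝ n L) (hmn : m + 1 ≤ n) :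
    ContDiff ℝ m (partialGrad₂ L) := by
  have hL1 : Differentiable ℝ L := hL.differentiable (ne_of_gt (lt_of_lt_of_le (by simp) hmn))
  rw [show partialGrad₂ L = _ from funext fun p => partialGrad₂_eq (hL1 p)]
  exact (toDual ℝ E).symm.contDiff.comp
    ((hL.fderiv_right hmn).clm_comp contDiff_const)

lemma contDiff_partialGrad₃ {m n : WithTop ℕ∞} (hL : ContDiff ℝ n L) (hmn : m + 1 ≤ n) :
    ContDiff ℝ m (partialGrad₃ L) := by
  have hL1 : Differentiable ℝ L := hL.differentiable (ne_of_gt (lt_of_lt_of_le (by simp) hmn))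
  rw [show partialGrad₃ L = _ from funext fun p => partialGrad₃_eq (hL1 p)]
  exact (toDual ℝ E).symm.contDiff.comp
    ((hL.fderiv_right hmn).clm_comp contDiff_const)

end PartialGradient

section WeightedIntegrationByParts

variable {a t α C : ℝ}

lemma norm_le_mul_sub_of_hasDerivAt {F : Type*} [NormedAddCommGroup F] [NormedSpace ℝ F]
    {φ φ' : ℝ → F} (hφc : ContinuousOn φ (Icc a t))
    (hφd : ∀ θ ∈ Ioo a t, HasDerivAt φ (φ' θ) θ) (hφ' : ∀ θ ∈ Ioo a t, ‖φ' θ‖ ≤ C)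
    (hφt : φ t = 0) {θ : ℝ} (hθ : θ ∈ Ioo a t) : ‖φ θ‖ ≤ C * (t - θ) := by
  have hsub : Ico θ t ⊆ Ioo a t := fun x hx => ⟨hθ.1.trans_le hx.1, hx.2⟩
  have h := norm_image_sub_le_of_norm_deriv_right_le_segment
    (hφc.mono (Icc_subset_Icc_left hθ.1.le)) (fun x hx => (hφd x (hsub hx)).hasDerivWithinAt)
    (fun x hx => hφ' x (hsub hx)) t (right_mem_Icc.mpr hθ.2.le)
  rwa [hφt, zero_sub, norm_neg] at h

lemma intervalIntegrable_div_const_sub_mul_rpow (hat : a ≤ t) (hα : 0 < α) {φ : ℝ → ℝ}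
    (hφc : ContinuousOn φ (Icc a t)) (hφ : ∀ θ ∈ Ioo a t, ‖φ θ‖ ≤ C * (t - θ)) (c : ℝ) :
    IntervalIntegrable (fun θ => c / (t - θ) * φ θ * (t - θ) ^ (α - 1)) volume a t := by
  have hφm : AEStronglyMeasurable φ (volume.restrict (uIoc a t)) :=
    (hφc.aestronglyMeasurable measurableSet_Icc).mono_measure
      (Measure.restrict_mono (by rw [uIoc_of_le hat]; exact Ioc_subset_Icc_self) le_rfl)
  refine ((intervalIntegrable_const_sub_rpow (r := α - 1) (by linarith) a t).const_mul
    (‖c‖ * C)).mono_fun'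
    (((by fun_prop : Measurable fun θ : ℝ => c / (t - θ)).aestronglyMeasurable.mul hφm).mul
      (by fun_prop : Measurable fun θ : ℝ => (t - θ) ^ (α - 1)).aestronglyMeasurable) ?_
  rw [uIoc_of_le hat, ← Measure.restrict_congr_set Ioo_ae_eq_Ioc]
  refine ae_restrict_of_forall_mem measurableSet_Ioo fun θ hθ => ?_
  have hpos : 0 < t - θ := sub_pos.mpr hθ.2
  have hw : 0 ≤ (t - θ) ^ (α - 1) := Real.rpow_nonneg hpos.le _
  calc ‖c / (t - θ) * φ θ * (t - θ) ^ (α - 1)‖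
      = ‖c‖ / (t - θ) * ‖φ θ‖ * (t - θ) ^ (α - 1) := by
        rw [norm_mul, norm_mul, norm_div, Real.norm_of_nonneg hpos.le, Real.norm_of_nonneg hw]
    _ ≤ ‖c‖ / (t - θ) * (C * (t - θ)) * (t - θ) ^ (α - 1) := by gcongr; exact hφ θ hθ
    _ = ‖c‖ * C * (t - θ) ^ (α - 1) := by field_simp

lemma tendsto_mul_const_sub_rpow_nhdsLT (hat : a < t) (hα : 0 < α) {φ : ℝ → ℝ}
    (hφ : ∀ θ ∈ Ioo a t, ‖φ θ‖ ≤ C * (t - θ)) :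
    Tendsto (fun θ => φ θ * (t - θ) ^ (α - 1)) (𝓝[<] t) (𝓝 0) := by
  have hvanish : Tendsto (fun θ => C * (t - θ) ^ α) (𝓝[<] t) (𝓝 0) := by
    have hc : Continuous fun θ : ℝ => C * (t - θ) ^ α :=
      continuous_const.mul ((continuous_const.sub continuous_id).rpow_const fun _ => Or.inr hα.le)
    simpa [Real.zero_rpow hα.ne'] using (hc.tendsto t).mono_left nhdsWithin_le_nhds
  refine squeeze_zero_norm' ?_ hvanish
  filter_upwards [Ioo_mem_nhdsLT hat] with θ hθ
  have hpos : 0 < t - θ := sub_pos.mpr hθ.2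
  calc ‖φ θ * (t - θ) ^ (α - 1)‖ = ‖φ θ‖ * (t - θ) ^ (α - 1) := by
        rw [norm_mul, Real.norm_of_nonneg (Real.rpow_nonneg hpos.le _)]
    _ ≤ C * (t - θ) * (t - θ) ^ (α - 1) := by gcongr; exact hφ θ hθ
    _ = C * (t - θ) ^ α := by rw [Real.rpow_sub_one hpos.ne']; field_simp

theorem integral_deriv_mul_const_sub_rpow (hat : a < t) (hα : 0 < α) {φ φ' : ℝ → ℝ}
    (hφc : ContinuousOn φ (Icc a t)) (hφd : ∀ θ ∈ Ioo a t, HasDerivAt φ (φ' θ) θ)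
    (hφ'c : ContinuousOn φ' (Icc a t)) (hφa : φ a = 0) (hφt : φ t = 0) :
    IntervalIntegrable (fun θ => (φ' θ + (1 - α) / (t - θ) * φ θ) * (t - θ) ^ (α - 1)) volume a t ∧
      ∫ θ in a..t, (φ' θ + (1 - α) / (t - θ) * φ θ) * (t - θ) ^ (α - 1) = 0 := by
  obtain ⟨C, hC⟩ := isCompact_Icc.exists_bound_of_continuousOn hφ'c
  have hφle := fun θ hθ => norm_le_mul_sub_of_hasDerivAt hφc hφd
    (fun x hx => hC x (Ioo_subset_Icc_self hx)) hφt (θ := θ) hθ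
  have hint : IntervalIntegrable
      (fun θ => (φ' θ + (1 - α) / (t - θ) * φ θ) * (t - θ) ^ (α - 1)) volume a t := by
    simp only [add_mul]
    exact ((intervalIntegrable_const_sub_rpow (by linarith) a t).continuousOn_mul
      (by rwa [uIcc_of_le hat.le])).add
      (intervalIntegrable_div_const_sub_mul_rpow hat.le hα hφc hφle _)
  refine ⟨hint, ?_⟩
  have hderiv : ∀ θ ∈ Ioo a t, HasDerivAt (fun θ => φ θ * (t - θ) ^ (α - 1))
      ((φ' θ + (1 - α) / (t - θ) * φ θ) * (t - θ) ^ (α - 1)) θ := by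
    intro θ hθ
    refine ((hφd θ hθ).mul (hasDerivAt_const_sub_rpow (α - 1) hθ.2.ne)).congr_deriv ?_
    ring
  have hlim_a : Tendsto (fun θ => φ θ * (t - θ) ^ (α - 1)) (𝓝[>] a) (𝓝 0) := by
    have hcont : ContinuousWithinAt (fun θ => φ θ * (t - θ) ^ (α - 1)) (Icc a t) a :=
      (hφc a (left_mem_Icc.mpr hat.le)).mul
        ((continuousAt_const.sub continuousAt_id).rpow_const
          (Or.inl (sub_ne_zero.mpr hat.ne'))).continuousWithinAt
    simpa [hφa] using (hcont.mono_of_mem_nhdsWithin (Icc_mem_nhdsGT hat)).tendsto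
  simpa using
    intervalIntegral.integral_eq_sub_of_hasDerivAt_of_tendsto hat hderiv hint hlim_a
      (tendsto_mul_const_sub_rpow_nhdsLT hat hα hφle)

theorem integral_deriv_inner_mul_const_sub_rpow {E : Type*} [NormedAddCommGroup E]
    [InnerProductSpace ℝ E] (hat : a < t) (hα : 0 < α) {G h : ℝ → E}
    (hG : ContDiffOn ℝ 1 G (Icc a t)) (hh : ContDiff ℝ 1 h) (h0a : h a = 0) (h0t : h t = 0) :
    IntervalIntegrable (fun θ => (⟪G θ, deriv h θ⟫ + ⟪derivWithin G (Icc a t) θ, h θ⟫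
      + (1 - α) / (t - θ) * ⟪G θ, h θ⟫) * (t - θ) ^ (α - 1)) volume a t ∧
    ∫ θ in a..t, (⟪G θ, deriv h θ⟫ + ⟪derivWithin G (Icc a t) θ, h θ⟫
      + (1 - α) / (t - θ) * ⟪G θ, h θ⟫) * (t - θ) ^ (α - 1) = 0 := by
  have hGd : ∀ θ ∈ Ioo a t, HasDerivAt G (derivWithin G (Icc a t) θ) θ := fun θ hθ =>
    ((hG.differentiableOn one_ne_zero).hasDerivAt (Icc_mem_nhds hθ.1 hθ.2)).congr_deriv
      (deriv_eq_derivWithin_Icc hθ)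
  exact integral_deriv_mul_const_sub_rpow hat hα
    (hG.continuousOn.inner hh.continuous.continuousOn)
    (fun θ hθ => (hGd θ hθ).inner ℝ (hh.differentiable one_ne_zero θ).hasDerivAt)
    ((hG.continuousOn.inner (hh.continuous_deriv le_rfl).continuousOn).add
      ((hG.continuousOn_derivWithin (uniqueDiffOn_Icc hat) le_rfl).inner
        hh.continuous.continuousOn))
    (by simp [h0a]) (by simp [h0t])

end WeightedIntegrationByParts

section FirstVariation

variable {E : Type*} [NormedAddCommGroup E] [InnerProductSpace ℝ E] [CompleteSpace E]
  {L : ℝ × E × E → ℝ} {q h : ℝ → E} {a t α : ℝ}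

theorem hasDerivAt_integral_lagrangian (hat : a < t) (hα : 0 < α) (hL : ContDiff ℝ 1 L)
    (hq : ContDiffOn ℝ 1 q (Icc a t)) (hh : ContDiff ℝ 1 h) :
    HasDerivAt (fun ε : ℝ => ∫ θ in a..t,
        L (θ, q θ + ε • h θ, deriv q θ + ε • deriv h θ) * (t - θ) ^ (α - 1))
      (∫ θ in a..t, (⟪partialGrad₂ L (θ, q θ, deriv q θ), h θ⟫
        + ⟪partialGrad₃ L (θ, q θ, deriv q θ), deriv h θ⟫) * (t - θ) ^ (α - 1)) 0 := by
  set u := derivWithin q (Icc a t)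
  have hfamily : (fun ε : ℝ => ∫ θ in a..t,
      L (θ, q θ + ε • h θ, deriv q θ + ε • deriv h θ) * (t - θ) ^ (α - 1)) =
      fun ε => ∫ θ in a..t,
        L ((θ, q θ, u θ) + ε • ((0 : ℝ), h θ, deriv h θ)) * (t - θ) ^ (α - 1) := by
    funext ε
    refine intervalIntegral.integral_congr_Ioo_of_le hat.le fun θ hθ => ?_
    simp [u, deriv_eq_derivWithin_Icc hθ]
  have hvalue : ∫ θ in a..t, (⟪partialGrad₂ L (θ, q θ, deriv q θ), h θ⟫
      + ⟪partialGrad₃ L (θ, q θ, deriv q θ), deriv h θ⟫) * (t - θ) ^ (α - 1) =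
      ∫ θ in a..t, fderiv ℝ L (θ, q θ, u θ) (0, h θ, deriv h θ) * (t - θ) ^ (α - 1) := by
    refine intervalIntegral.integral_congr_Ioo_of_le hat.le fun θ hθ => ?_
    rw [deriv_eq_derivWithin_Icc (f := q) hθ,
      inner_partialGrad₂_add_inner_partialGrad₃ (hL.differentiable one_ne_zero _)]
  rw [hfamily, hvalue]
  refine hasDerivAt_integral_comp_add_smul_mul hL ?_
    (continuous_const.prodMk (hh.continuous.prodMk (hh.continuous_deriv le_rfl))).continuousOn
    (intervalIntegrable_const_sub_rpow (r := α - 1) (by linarith) a t)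
  rw [uIcc_of_le hat.le]
  exact continuousOn_id.prodMk (hq.continuousOn.prodMk
    (hq.continuousOn_derivWithin (uniqueDiffOn_Icc hat) le_rfl))

theorem integral_inner_euler_lagrange (hat : a < t) (hα : 0 < α) (hL : ContDiff ℝ 2 L)
    (hq : ContDiffOn ℝ 2 q (Icc a t)) (hh : ContDiff ℝ 1 h) (h0a : h a = 0) (h0t : h t = 0) :
    ∫ θ in a..t, ⟪partialGrad₂ L (θ, q θ, deriv q θ)
        - deriv (fun s => partialGrad₃ L (s, q s, deriv q s)) θ
        - ((1 - α) / (t - θ)) • partialGrad₃ L (θ, q θ, deriv q θ), h θ⟫ * (t - θ) ^ (α - 1) =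
      ∫ θ in a..t, (⟪partialGrad₂ L (θ, q θ, deriv q θ), h θ⟫
        + ⟪partialGrad₃ L (θ, q θ, deriv q θ), deriv h θ⟫) * (t - θ) ^ (α - 1) := by
  set u := derivWithin q (Icc a t)
  have hγ : ContDiffOn ℝ 1 (fun θ => (θ, q θ, u θ)) (Icc a t) := contDiffOn_id.prodMk
    ((hq.of_le one_le_two).prodMk (hq.derivWithin (uniqueDiffOn_Icc hat) (by norm_num)))
  set A := fun θ => partialGrad₂ L (θ, q θ, u θ)
  set G := fun θ => partialGrad₃ L (θ, q θ, u θ)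
  have hA : ContinuousOn A (Icc a t) :=
    ((contDiff_partialGrad₂ hL (by norm_num)).comp_contDiffOn hγ).continuousOn
  have hG : ContDiffOn ℝ 1 G (Icc a t) :=
    (contDiff_partialGrad₃ hL (by norm_num)).comp_contDiffOn hγ
  set G' := derivWithin G (Icc a t)
  obtain ⟨hψint, hψ⟩ := integral_deriv_inner_mul_const_sub_rpow hat hα hG hh h0a h0t
  have hfirst_int : IntervalIntegrable
      (fun θ => (⟪A θ, h θ⟫ + ⟪G θ, deriv h θ⟫) * (t - θ) ^ (α - 1)) volume a t := by
    refine (intervalIntegrable_const_sub_rpow (by linarith) a t).continuousOn_mul ?_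
    rw [uIcc_of_le hat.le]
    exact (hA.inner hh.continuous.continuousOn).add
      (hG.continuousOn.inner (hh.continuous_deriv le_rfl).continuousOn)
  have hEL : ∀ θ ∈ Ioo a t,
      ⟪partialGrad₂ L (θ, q θ, deriv q θ) - deriv (fun s => partialGrad₃ L (s, q s, deriv q s)) θ
        - ((1 - α) / (t - θ)) • partialGrad₃ L (θ, q θ, deriv q θ), h θ⟫ * (t - θ) ^ (α - 1) =
      (⟪A θ, h θ⟫ + ⟪G θ, deriv h θ⟫) * (t - θ) ^ (α - 1)
        - (⟪G θ, deriv h θ⟫ + ⟪G' θ, h θ⟫ + (1 - α) / (t - θ) * ⟪G θ, h θ⟫)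
          * (t - θ) ^ (α - 1) := by
    intro θ hθ
    have hG'θ : deriv (fun s => partialGrad₃ L (s, q s, deriv q s)) θ = G' θ :=
      deriv_eq_derivWithin_Icc_of_eqOn
        (fun s hs => by simp only [G, u, deriv_eq_derivWithin_Icc hs]) hθ
    rw [hG'θ, deriv_eq_derivWithin_Icc (f := q) hθ, inner_sub_left, inner_sub_left,
      real_inner_smul_left]
    ring
  rw [intervalIntegral.integral_congr_Ioo_of_le hat.le hEL,
    intervalIntegral.integral_sub hfirst_int hψint, hψ, sub_zero]
  exact intervalIntegral.integral_congr_Ioo_of_le hat.le fun θ hθ => by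
    rw [deriv_eq_derivWithin_Icc (f := q) hθ]

end FirstVariation

theorem falva_first_order_first_variation_general
    (n : ℕ) (a t α : ℝ) (hat : a < t) (hα0 : 0 < α)
    (L : ℝ × EuclideanSpace ℝ (Fin n) × EuclideanSpace ℝ (Fin n) → ℝ)
    (hL : ContDiff ℝ 2 L)
    (q : ℝ → EuclideanSpace ℝ (Fin n))
    (hq : ContDiffOn ℝ 2 q (Set.Icc a t)) :
    ∀ h : ℝ → EuclideanSpace ℝ (Fin n),
      ContDiff ℝ 2 h → h a = 0 → h t = 0 →
      HasDerivAt (fun ε : ℝ => (1 / Real.Gamma α) *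
          ∫ θ in a..t,
            L (θ, q θ + ε • h θ, deriv q θ + ε • deriv h θ) * (t - θ) ^ (α - 1))
        ((1 / Real.Gamma α) *
          ∫ θ in a..t,
            ⟪gradient (fun y => L (θ, y, deriv q θ)) (q θ)
                - deriv (fun s => gradient (fun v => L (s, q s, v)) (deriv q s)) θ
                - ((1 - α) / (t - θ)) • gradient (fun v => L (θ, q θ, v)) (deriv q θ),
              h θ⟫ * (t - θ) ^ (α - 1))
        0 := by
  intro h hh h0a h0t
  have hvariation := (hasDerivAt_integral_lagrangian (α := α) hat hα0 (hL.of_le one_le_two)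
    (hq.of_le one_le_two) (hh.of_le one_le_two)).const_mul (1 / Real.Gamma α)
  rw [← integral_inner_euler_lagrange hat hα0 hL hq (hh.of_le one_le_two) h0a h0t] at hvariation
  exact hvariation

/-- **First variation of the first-order FALVA functional.**
For every `C²` variation `h` vanishing at `a` and `t`, the derivative at `ε = 0`
of `ε ↦ (1/Γ(α)) ∫_a^t L(θ, q+εh, q'+εh') (t-θ)^(α-1) dθ` equals
`(1/Γ(α)) ∫_a^t ⟨∂₂L - d/dθ ∂₃L - ((1-α)/(t-θ)) ∂₃L, h(θ)⟩ (t-θ)^(α-1) dθ`. -/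
theorem falva_first_order_first_variation
    (n : ℕ) (hn : 1 ≤ n) (a t α : ℝ) (hat : a < t) (hα0 : 0 < α) (hα1 : α ≤ 1)
    (L : ℝ × EuclideanSpace ℝ (Fin n) × EuclideanSpace ℝ (Fin n) → ℝ)
    (hL : ContDiff ℝ 2 L)
    (q : ℝ → EuclideanSpace ℝ (Fin n))
    (hq : ContDiffOn ℝ 2 q (Set.Icc a t)) :
    ∀ h : ℝ → EuclideanSpace ℝ (Fin n),
      ContDiff ℝ 2 h → h a = 0 → h t = 0 →
      HasDerivAt (fun ε : ℝ => (1 / Real.Gamma α) *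
          ∫ θ in a..t,
            L (θ, q θ + ε • h θ, deriv q θ + ε • deriv h θ) * (t - θ) ^ (α - 1))
        ((1 / Real.Gamma α) *
          ∫ θ in a..t,
            ⟪gradient (fun y => L (θ, y, deriv q θ)) (q θ)
                - deriv (fun s => gradient (fun v => L (s, q s, v)) (deriv q s)) θ
                - ((1 - α) / (t - θ)) • gradient (fun v => L (θ, q θ, v)) (deriv q θ),
              h θ⟫ * (t - θ) ^ (α - 1))
        0 :=
  falva_first_order_first_variation_general n a t α hat hα0 L hL q hq
end

section
/- Let n, m ≥ 1, let a < t be real numbers, let 0 < α ≤ 1, let L : ℝ × (ℝⁿ)^{m+1} → ℝ be of class C^{2m}, and let q : ℝ → ℝⁿ be of class C^{2m} on [a,t]. For i = 0,…,m let P_i(θ) = ∂_{i+2}L(θ, q(θ), q'(θ), …, q^{(m)}(θ)), for j = 1,…,m let ψ^j(θ) = Σ_{i=0}^{m−j} (−1)^i (d^i/dθ^i) P_{i+j}(θ), and let F(θ) = ((1−α)/(t−θ)) Σ_{i=1}^{m} i·(−1)^{i−1} (d^{i−1}/dθ^{i−1}) P_i(θ) + Σ_{k=2}^{m} Σ_{i=2}^{k}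 (−1)^{i−1} (∏_{j=1}^{i}(j−α)) / (t−θ)^i · binom(k, k−i) · (d^{k−i}/dθ^{k−i}) P_k(θ). Suppose that q satisfies the higher-order Euler–Lagrange equations Σ_{i=0}^{m} (−1)^i (d^i/dθ^i) P_i(θ) = F(θ) for all θ ∈ (a,t). Then for all θ ∈ (a,t): (d/dθ)[ L(θ, q(θ), q'(θ), …, q^{(m)}(θ)) − Σ_{j=1}^{m} ⟨ψ^j(θ), q^{(j)}(θ)⟩ ] = ∂₁L(θ, q(θ), q'(θ), …, q^{(m)}(θ)) + ⟨F(θ), q'(θ)⟩. -/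
open scoped RealInnerProductSpace
open Finset

/-!
Along the curve `s ↦ (s, q(s), …, q^{(m)}(s))` the chain rule gives
`(d/dθ) L = ∂₁L + ∑_{i=0}^m ⟨P_i, q^{(i+1)}⟩`. The momenta satisfy `(ψ^{j+1})' = P_j - ψ^j`,
with `ψ^m = P_m`, while `ψ^0 = F` is exactly the Euler–Lagrange equation. Hence the derivative
of `∑_j ⟨ψ^j, q^{(j)}⟩` telescopes to `∑_{i=0}^m ⟨P_i, q^{(i+1)}⟩ - ⟨F, q'⟩`, and the
difference is `∂₁L + ⟨F, q'⟩`.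
-/

section IteratedDeriv

variable {𝕜 : Type*} [NontriviallyNormedField 𝕜] {F : Type*} [NormedAddCommGroup F]
  [NormedSpace 𝕜 F] {f : 𝕜 → F} {s : Set 𝕜} {x : 𝕜} {k : ℕ} {n : WithTop ℕ∞}

theorem ContDiffOn.iteratedDeriv_of_isOpen (hf : ContDiffOn 𝕜 n f s) (hs : IsOpen s)
    {m : WithTop ℕ∞} (hmn : m + k ≤ n) : ContDiffOn 𝕜 m (iteratedDeriv k f) s := by
  induction k generalizing m with
  | zero => simpa using hf.of_le (by simpa using hmn)
  | succ k ih =>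
    rw [iteratedDeriv_succ]
    refine (ih (m := m + 1) ?_).deriv_of_isOpen hs le_rfl
    simpa [add_assoc, add_comm (1 : WithTop ℕ∞)] using hmn

theorem ContDiffOn.differentiableAt_iteratedDeriv (hf : ContDiffOn 𝕜 n f s) (hs : IsOpen s)
    (hx : x ∈ s) (hk : k + 1 ≤ n) : DifferentiableAt 𝕜 (iteratedDeriv k f) x :=
  ((hf.iteratedDeriv_of_isOpen hs (m := 1) (by rwa [add_comm])).differentiableOn one_ne_zero
    x hx).differentiableAt (hs.mem_nhds hx)

theorem DifferentiableAt.hasDerivAt_iteratedDeriv (h : DifferentiableAt 𝕜 (iteratedDeriv k f) x) :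
    HasDerivAt (iteratedDeriv k f) (iteratedDeriv (k + 1) f x) x :=
  iteratedDeriv_succ (f := f) ▸ h.hasDerivAt

end IteratedDeriv

section PartialGradient

variable {G : Type*} [NormedAddCommGroup G] [NormedSpace ℝ G] {ι : Type*} [Fintype ι]
  [DecidableEq ι]
  {E : Type*} [NormedAddCommGroup E] [InnerProductSpace ℝ E] [CompleteSpace E]
  {L : G × (ι → E) → ℝ} {z : G × (ι → E)}

/-- The paper's `∂_{i+2}L`: the gradient of `L` in its `i`-th vector slot. -/
noncomputable def partialGradient (L : G × (ι → E) → ℝ) (i : ι) (z : G × (ι → E)) : E :=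
  gradient (fun y => L (z.1, Function.update z.2 i y)) (z.2 i)

theorem partialGradient_eq (hL : DifferentiableAt ℝ L z) (i : ι) :
    partialGradient L i z = (InnerProductSpace.toDual ℝ E).symm
      ((fderiv ℝ L z).comp ((ContinuousLinearMap.inr ℝ G (ι → E)).comp
        (ContinuousLinearMap.single ℝ (fun _ => E) i))) := by
  have hslot : HasFDerivAt (fun y => (z.1, Function.update z.2 i y))
      ((ContinuousLinearMap.inr ℝ G (ι → E)).comp
        (ContinuousLinearMap.single ℝ (fun _ => E) i)) (z.2 i) := by
    convert (hasFDerivAt_const z.1 _).prodMk (hasFDerivAt_update (𝕜 := ℝ) z.2 (z.2 i)) using 1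
    ext v j
    · rfl
    · rcases eq_or_ne j i with rfl | hj <;> simp [*]
  have hL' : HasFDerivAt L (fderiv ℝ L z) (z.1, Function.update z.2 i (z.2 i)) := by
    rw [Function.update_eq_self]
    exact hL.hasFDerivAt
  rw [partialGradient, gradient]
  exact congrArg _ (hL'.comp (z.2 i) hslot).fderiv

theorem inner_partialGradient (hL : DifferentiableAt ℝ L z) (i : ι) (v : E) :
    ⟪partialGradient L i z, v⟫ = fderiv ℝ L z (0, Pi.single i v) := by
  rw [partialGradient_eq hL, InnerProductSpace.toDual_symm_apply]
  rfl

theorem ContDiff.partialGradient {n m : WithTop ℕ∞} (hL : ContDiff ℝ n L) (hmn : m + 1 ≤ n)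
    (i : ι) : ContDiff ℝ m (partialGradient L i) := by
  have hdiff : Differentiable ℝ L := hL.differentiable (by
    rintro rfl
    exact absurd hmn (by simp))
  rw [show _root_.partialGradient L i = fun z => _ from
    funext fun z => partialGradient_eq (hdiff z) i]
  exact (InnerProductSpace.toDual ℝ E).symm.contDiff.comp
    ((hL.fderiv_right hmn).clm_comp contDiff_const)

theorem hasDerivAt_comp_prodMk_curve {L : ℝ × (ι → E) → ℝ} {γ : ℝ → ι → E} {γ' : ι → E} {θ : ℝ}
    (hL : DifferentiableAt ℝ L (θ, γ θ)) (hγ : HasDerivAt γ γ' θ) :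
    HasDerivAt (fun s => L (s, γ s))
      (deriv (fun s => L (s, γ θ)) θ + ∑ i, ⟪partialGradient L i (θ, γ θ), γ' i⟫) θ := by
  have htime : HasDerivAt (fun s => L (s, γ θ)) (fderiv ℝ L (θ, γ θ) (1, 0)) θ :=
    hL.hasFDerivAt.comp_hasDerivAt θ ((hasDerivAt_id θ).prodMk (hasDerivAt_const θ (γ θ)))
  have hsplit : ((1 : ℝ), γ') = (1, 0) + ∑ i, ((0 : ℝ), Pi.single i (γ' i)) := by
    ext <;> simp [Prod.fst_sum, Prod.snd_sum, Finset.univ_sum_single]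
  simp_rw [htime.deriv, inner_partialGradient hL, ← map_sum, ← map_add, ← hsplit]
  exact hL.hasFDerivAt.comp_hasDerivAt θ ((hasDerivAt_id θ).prodMk hγ)

end PartialGradient

section Momentum

variable {E : Type*} [NormedAddCommGroup E] [NormedSpace ℝ E] {P : ℕ → ℝ → E} {m j : ℕ} {θ : ℝ}

/-- The paper's `ψ^j`, where `P k` stands for `∂_{k+2}L` along the curve. -/
noncomputable def momentum (P : ℕ → ℝ → E) (m j : ℕ) (θ : ℝ) : E :=
  ∑ i ∈ range (m - j + 1), (-1 : ℝ) ^ i • iteratedDeriv i (P (i + j)) θ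

theorem momentum_self : momentum P m m θ = P m θ := by
  simp [momentum]

theorem momentum_eq_sub (hj : j < m) :
    momentum P m j θ = P j θ - ∑ i ∈ range (m - (j + 1) + 1),
      (-1 : ℝ) ^ i • iteratedDeriv (i + 1) (P (i + (j + 1))) θ := by
  rw [momentum, show m - j + 1 = m - (j + 1) + 1 + 1 by omega, sum_range_succ', eq_sub_iff_add_eq,
    add_comm, ← add_assoc, ← sum_add_distrib]
  simp [pow_succ, add_right_comm _ 1 j, add_assoc]

theorem hasDerivAt_momentum_succ
    (hP : ∀ k ≤ m, ∀ i < m, DifferentiableAt ℝ (iteratedDeriv i (P k)) θ) (hj : j < m) :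
    HasDerivAt (momentum P m (j + 1)) (P j θ - momentum P m j θ) θ := by
  rw [momentum_eq_sub hj, sub_sub_cancel]
  refine HasDerivAt.fun_sum fun i hi => ?_
  have hi := mem_range.1 hi
  exact ((hP _ (by omega) i (by omega)).hasDerivAt_iteratedDeriv).const_smul _

end Momentum

section MomentumPairing

variable {E : Type*} [NormedAddCommGroup E] [InnerProductSpace ℝ E]

theorem sum_Icc_inner_telescope (p ψ x : ℕ → E) (m : ℕ) :
    ∑ j ∈ Icc 1 m, (⟪ψ j, x (j + 1)⟫ + ⟪p (j - 1) - ψ (j - 1), x j⟫)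
      = ∑ i ∈ range m, ⟪p i, x (i + 1)⟫ + ⟪ψ m, x (m + 1)⟫ - ⟪ψ 0, x 1⟫ := by
  induction m with
  | zero => simp
  | succ m ih =>
    rw [sum_Icc_succ_top (by omega), ih, sum_range_succ, Nat.add_sub_cancel, inner_sub_left]
    ring

theorem hasDerivAt_sum_inner_momentum {P x : ℕ → ℝ → E} {m : ℕ} {θ : ℝ}
    (hP : ∀ k ≤ m, ∀ i < m, DifferentiableAt ℝ (iteratedDeriv i (P k)) θ)
    (hx : ∀ j ≤ m, HasDerivAt (x j) (x (j + 1) θ) θ) :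
    HasDerivAt (fun s => ∑ j ∈ Icc 1 m, ⟪momentum P m j s, x j s⟫)
      (∑ i ∈ range (m + 1), ⟪P i θ, x (i + 1) θ⟫ - ⟪momentum P m 0 θ, x 1 θ⟫) θ := by
  rw [sum_range_succ, ← momentum_self (P := P) (θ := θ),
    ← sum_Icc_inner_telescope (fun i => P i θ) (momentum P m · θ) (x · θ)]
  refine HasDerivAt.fun_sum fun j hj => ?_
  obtain ⟨hj1, hjm⟩ := mem_Icc.1 hj
  obtain ⟨j, rfl⟩ := Nat.exists_eq_add_of_le' hj1
  exact (hasDerivAt_momentum_succ hP hjm).inner ℝ (hx _ hjm)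

end MomentumPairing

theorem falva_higher_order_dubois_reymond_general
    (n m : ℕ) (hm : 1 ≤ m) (a t : ℝ)
    (L : ℝ × (Fin (m + 1) → EuclideanSpace ℝ (Fin n)) → ℝ)
    (hL : ContDiff ℝ (2 * m : ℕ) L)
    (q : ℝ → EuclideanSpace ℝ (Fin n))
    (hq : ContDiffOn ℝ (2 * m : ℕ) q (Set.Icc a t))
    (P : ℕ → ℝ → EuclideanSpace ℝ (Fin n))
    (hP : ∀ (i : ℕ) (hi : i < m + 1) (θ : ℝ),
      P i θ = gradient
        (fun y => L (θ, Function.update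
          (fun j : Fin (m + 1) => iteratedDeriv (j : ℕ) q θ) ⟨i, hi⟩ y))
        (iteratedDeriv i q θ))
    (ψ : ℕ → ℝ → EuclideanSpace ℝ (Fin n))
    (hψ : ∀ (j : ℕ) (θ : ℝ),
      ψ j θ = ∑ i ∈ Finset.range (m - j + 1),
        (-1 : ℝ) ^ i • iteratedDeriv i (P (i + j)) θ)
    (F : ℝ → EuclideanSpace ℝ (Fin n))
    (hEL : ∀ θ ∈ Set.Ioo a t,
      ∑ i ∈ Finset.range (m + 1), (-1 : ℝ) ^ i • iteratedDeriv i (P i) θ = F θ) :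
    ∀ θ ∈ Set.Ioo a t,
      deriv (fun s =>
          L (s, fun j : Fin (m + 1) => iteratedDeriv (j : ℕ) q s)
            - ∑ j ∈ Finset.Icc 1 m, ⟪ψ j s, iteratedDeriv j q s⟫) θ
        = deriv (fun s =>
            L (s, fun j : Fin (m + 1) => iteratedDeriv (j : ℕ) q θ)) θ
          + ⟪F θ, deriv q θ⟫ := by
  intro θ hθ
  obtain rfl : ψ = momentum P m := funext fun j => funext (hψ j)
  have hqo : ContDiffOn ℝ (2 * m : ℕ) q (Set.Ioo a t) := hq.mono Set.Ioo_subset_Icc_self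
  have hq' : ∀ j ≤ m, HasDerivAt (iteratedDeriv j q) (iteratedDeriv (j + 1) q θ) θ := fun j hj =>
    (hqo.differentiableAt_iteratedDeriv isOpen_Ioo hθ (by norm_cast; omega))
      |>.hasDerivAt_iteratedDeriv
  have hPsmooth : ∀ k ≤ m, ContDiffOn ℝ m (P k) (Set.Ioo a t) := fun k hk => by
    rw [show P k = fun s => partialGradient L ⟨k, by omega⟩ (s, fun j => iteratedDeriv j q s)
      from funext (hP k (by omega))]
    refine (hL.partialGradient (by norm_cast; omega) _).comp_contDiffOn
      (contDiffOn_id.prodMk (contDiffOn_pi.2 fun j => ?_))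
    exact hqo.iteratedDeriv_of_isOpen isOpen_Ioo (by norm_cast; omega)
  have hmomentum := hasDerivAt_sum_inner_momentum (x := (iteratedDeriv · q))
    (fun k hk i hi => (hPsmooth k hk).differentiableAt_iteratedDeriv isOpen_Ioo hθ (by norm_cast))
    hq'
  have hlagrangian := hasDerivAt_comp_prodMk_curve (hL.differentiable (by norm_cast; omega) _)
    (hasDerivAt_pi.2 fun j : Fin (m + 1) => hq' j (by omega))
  have hgradient : ∑ i : Fin (m + 1), ⟪partialGradient L i (θ, fun j => iteratedDeriv j q θ),
      iteratedDeriv (i + 1) q θ⟫ = ∑ i ∈ range (m + 1), ⟪P i θ, iteratedDeriv (i + 1) q θ⟫ := by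
    rw [← Fin.sum_univ_eq_sum_range (fun i => ⟪P i θ, iteratedDeriv (i + 1) q θ⟫)]
    exact sum_congr rfl fun i _ => by rw [hP i i.isLt]; rfl
  have hψ0 : momentum P m 0 θ = F θ := by simpa [momentum] using hEL θ hθ
  rw [(hlagrangian.fun_sub hmomentum).deriv, hgradient, hψ0, iteratedDeriv_one]
  ring

/-- **Higher-order DuBois-Reymond condition for FALVA problems.**
With `P i θ = ∂_{i+2}L(θ, q(θ), …, q^{(m)}(θ))`, momenta
`ψ^j(θ) = ∑_{i=0}^{m-j} (-1)^i (d^i/dθ^i) P_{i+j}(θ)`, and external force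
`F(θ) = ((1-α)/(t-θ)) ∑_{i=1}^m i (-1)^{i-1} (d^{i-1}/dθ^{i-1}) P_i(θ)
  + ∑_{k=2}^m ∑_{i=2}^k (-1)^{i-1} (∏_{j=1}^i (j-α))/(t-θ)^i C(k,k-i)
      (d^{k-i}/dθ^{k-i}) P_k(θ)`,
if `q` satisfies the higher-order Euler–Lagrange equations
`∑_{i=0}^m (-1)^i (d^i/dθ^i) P_i(θ) = F(θ)` on `(a,t)`, then on `(a,t)`:
`(d/dθ)[L(θ, q, …, q^{(m)}) - ∑_{j=1}^m ⟨ψ^j(θ), q^{(j)}(θ)⟩]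
  = ∂₁L(θ, q, …, q^{(m)}) + ⟨F(θ), q'(θ)⟩`. -/
theorem falva_higher_order_dubois_reymond
    (n m : ℕ) (hn : 1 ≤ n) (hm : 1 ≤ m) (a t α : ℝ) (hat : a < t)
    (hα0 : 0 < α) (hα1 : α ≤ 1)
    (L : ℝ × (Fin (m + 1) → EuclideanSpace ℝ (Fin n)) → ℝ)
    (hL : ContDiff ℝ (2 * m : ℕ) L)
    (q : ℝ → EuclideanSpace ℝ (Fin n))
    (hq : ContDiffOn ℝ (2 * m : ℕ) q (Set.Icc a t))
    (P : ℕ → ℝ → EuclideanSpace ℝ (Fin n))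
    (hP : ∀ (i : ℕ) (hi : i < m + 1) (θ : ℝ),
      P i θ = gradient
        (fun y => L (θ, Function.update
          (fun j : Fin (m + 1) => iteratedDeriv (j : ℕ) q θ) ⟨i, hi⟩ y))
        (iteratedDeriv i q θ))
    (ψ : ℕ → ℝ → EuclideanSpace ℝ (Fin n))
    (hψ : ∀ (j : ℕ) (θ : ℝ),
      ψ j θ = ∑ i ∈ Finset.range (m - j + 1),
        (-1 : ℝ) ^ i • iteratedDeriv i (P (i + j)) θ)
    (F : ℝ → EuclideanSpace ℝ (Fin n))
    (hF : ∀ θ : ℝ,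
      F θ = ((1 - α) / (t - θ)) •
              ∑ i ∈ Finset.range (m + 1),
                ((i : ℝ) * (-1 : ℝ) ^ (i - 1)) • iteratedDeriv (i - 1) (P i) θ
          + ∑ k ∈ Finset.range (m + 1), ∑ i ∈ Finset.Icc 2 k,
              ((-1 : ℝ) ^ (i - 1) * (∏ j ∈ Finset.Icc 1 i, ((j : ℝ) - α))
                  / (t - θ) ^ i * (Nat.choose k (k - i) : ℝ)) •
                iteratedDeriv (k - i) (P k) θ)
    (hEL : ∀ θ ∈ Set.Ioo a t,
      ∑ i ∈ Finset.range (m + 1), (-1 : ℝ) ^ i • iteratedDeriv i (P i) θ = F θ) :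
    ∀ θ ∈ Set.Ioo a t,
      deriv (fun s =>
          L (s, fun j : Fin (m + 1) => iteratedDeriv (j : ℕ) q s)
            - ∑ j ∈ Finset.Icc 1 m, ⟪ψ j s, iteratedDeriv j q s⟫) θ
        = deriv (fun s =>
            L (s, fun j : Fin (m + 1) => iteratedDeriv (j : ℕ) q θ)) θ
          + ⟪F θ, deriv q θ⟫ :=
  falva_higher_order_dubois_reymond_general n m hm a t L hL q hq P hP ψ hψ F hEL
end

section
/- Let n ≥ 1, let a < t be real numbers, let 0 < α ≤ 1, let L : ℝ × ℝⁿ × ℝⁿ → ℝ be of class C², and let q : ℝ → ℝⁿ be of class C² on [a,t]. Suppose that q satisfies, for all θ ∈ (a,t), the Euler–Lagrange equation ∂₂L(θ, q(θ), q'(θ)) − (d/dθ)[∂₃L(θ, q(θ), q'(θ))] = ((1−α)/(t−θ)) ∂₃L(θ, q(θ), q'(θ)). Then for all θ ∈ (a,t): (d/dθ)[ L(θ, q(θ), q'(θ)) − ⟨∂₃L(θ, q(θ), q'(θ)), q'(θ)⟩ ] = ∂₁L(θ, q(θ), q'(θ)) + ((1−α)/(t−θ)) ⟨∂₃L(θ,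 q(θ), q'(θ)), q'(θ)⟩. -/
/-!
Along the curve `γ s = (s, q s, q' s)` the chain rule gives
`(L ∘ γ)' = ∂₁L + ⟪∂₂L, q'⟫ + ⟪∂₃L, q''⟫`, and the product rule gives
`⟪∂₃L ∘ γ, q'⟫' = ⟪(∂₃L ∘ γ)', q'⟫ + ⟪∂₃L, q''⟫`. The `q''` terms cancel in the difference,
leaving `∂₁L + ⟪∂₂L - (∂₃L ∘ γ)', q'⟫`, and the Euler–Lagrange equation replaces the second
factor by `((1 - α) / (t - θ)) • ∂₃L`.
-/

open scoped RealInnerProductSpace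
open InnerProductSpace ContinuousLinearMap

section PartialDerivatives

variable {E : Type*} [NormedAddCommGroup E] [InnerProductSpace ℝ E]
  {L : ℝ × E × E → ℝ} {s : ℝ} {y v : E}

lemma hasDerivAt_slot₁ (hL : DifferentiableAt ℝ L (s, y, v)) :
    HasDerivAt (fun r => L (r, y, v)) (fderiv ℝ L (s, y, v) (1, 0, 0)) s :=
  hL.hasFDerivAt.comp_hasDerivAt s ((hasDerivAt_id s).prodMk (hasDerivAt_const s (y, v)))

variable [CompleteSpace E]

lemma inner_gradient_slot₂ (hL : DifferentiableAt ℝ L (s, y, v)) (h : E) :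
    ⟪gradient (fun z => L (s, z, v)) y, h⟫ = fderiv ℝ L (s, y, v) (0, h, 0) := by
  have hmk : HasFDerivAt (fun z => ((s, z, v) : ℝ × E × E))
      (inr ℝ ℝ (E × E) ∘L inl ℝ E E) y :=
    (hasFDerivAt_prodMk_right s (y, v)).comp y (hasFDerivAt_prodMk_left y v)
  have hpartial : HasFDerivAt (fun z => L (s, z, v))
      ((fderiv ℝ L (s, y, v)).comp (inr ℝ ℝ (E × E) ∘L inl ℝ E E)) y :=
    hL.hasFDerivAt.comp y hmk
  rw [inner_gradient_left, hpartial.fderiv]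
  rfl

lemma gradient_slot₃_eq (hL : DifferentiableAt ℝ L (s, y, v)) :
    gradient (fun w => L (s, y, w)) v
      = (toDual ℝ E).symm ((fderiv ℝ L (s, y, v)).comp (inr ℝ ℝ (E × E) ∘L inr ℝ E E)) := by
  have hmk : HasFDerivAt (fun w => ((s, y, w) : ℝ × E × E))
      (inr ℝ ℝ (E × E) ∘L inr ℝ E E) v :=
    (hasFDerivAt_prodMk_right s (y, v)).comp v (hasFDerivAt_prodMk_right y v)
  have hpartial : HasFDerivAt (fun w => L (s, y, w))
      ((fderiv ℝ L (s, y, v)).comp (inr ℝ ℝ (E × E) ∘L inr ℝ E E)) v :=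
    hL.hasFDerivAt.comp v hmk
  rw [gradient, hpartial.fderiv]

lemma inner_gradient_slot₃ (hL : DifferentiableAt ℝ L (s, y, v)) (h : E) :
    ⟪gradient (fun w => L (s, y, w)) v, h⟫ = fderiv ℝ L (s, y, v) (0, 0, h) := by
  rw [gradient_slot₃_eq hL, toDual_symm_apply]
  rfl

lemma contDiff_gradient_slot₃ {n k : WithTop ℕ∞} (hL : ContDiff ℝ n L) (hk : k + 1 ≤ n) :
    ContDiff ℝ k (fun x : ℝ × E × E => gradient (fun w => L (x.1, x.2.1, w)) x.2.2) := by
  have hLd : Differentiable ℝ L :=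
    hL.differentiable (zero_lt_one.trans_le (le_add_self.trans hk)).ne'
  simp_rw [gradient_slot₃_eq (hLd _)]
  exact (toDual ℝ E).symm.toContinuousLinearEquiv.contDiff.comp
    ((hL.fderiv_right hk).clm_comp contDiff_const)

variable {q v : ℝ → E} {θ : ℝ}

lemma hasDerivAt_sub_inner_gradient_slot₃ (hL : DifferentiableAt ℝ L (θ, q θ, v θ))
    (hq : HasDerivAt q (v θ) θ) (hv : DifferentiableAt ℝ v θ)
    (hp : DifferentiableAt ℝ (fun s => gradient (fun w => L (s, q s, w)) (v s)) θ) :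
    HasDerivAt
      (fun s => L (s, q s, v s) - ⟪gradient (fun w => L (s, q s, w)) (v s), v s⟫)
      (deriv (fun s => L (s, q θ, v θ)) θ
        + ⟪gradient (fun y => L (θ, y, v θ)) (q θ)
            - deriv (fun s => gradient (fun w => L (s, q s, w)) (v s)) θ, v θ⟫) θ := by
  have hγ : HasDerivAt (fun s => ((s, q s, v s) : ℝ × E × E)) (1, v θ, deriv v θ) θ :=
    (hasDerivAt_id θ).prodMk (hq.prodMk hv.hasDerivAt)
  have hchain := hL.hasFDerivAt.comp_hasDerivAt θ hγ
  have hproduct := hp.hasDerivAt.inner ℝ hv.hasDerivAt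
  have hsplit : fderiv ℝ L (θ, q θ, v θ) (1, v θ, deriv v θ)
      = fderiv ℝ L (θ, q θ, v θ) (1, 0, 0) + fderiv ℝ L (θ, q θ, v θ) (0, v θ, 0)
        + fderiv ℝ L (θ, q θ, v θ) (0, 0, deriv v θ) := by
    rw [← map_add, ← map_add]
    simp
  refine (hchain.sub hproduct).congr_deriv ?_
  rw [hsplit, (hasDerivAt_slot₁ hL).deriv, ← inner_gradient_slot₂ hL,
    ← inner_gradient_slot₃ hL, inner_sub_left]
  ring

end PartialDerivatives

theorem falva_first_order_dubois_reymond_general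
    (n : ℕ) (a t α : ℝ)
    (L : ℝ × EuclideanSpace ℝ (Fin n) × EuclideanSpace ℝ (Fin n) → ℝ)
    (hL : ContDiff ℝ 2 L)
    (q : ℝ → EuclideanSpace ℝ (Fin n))
    (hq : ContDiffOn ℝ 2 q (Set.Icc a t))
    (hEL : ∀ θ ∈ Set.Ioo a t,
      gradient (fun y => L (θ, y, deriv q θ)) (q θ)
          - deriv (fun s => gradient (fun v => L (s, q s, v)) (deriv q s)) θ
        = ((1 - α) / (t - θ)) • gradient (fun v => L (θ, q θ, v)) (deriv q θ)) :
    ∀ θ ∈ Set.Ioo a t,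
      deriv (fun s =>
          L (s, q s, deriv q s)
            - ⟪gradient (fun v => L (s, q s, v)) (deriv q s), deriv q s⟫) θ
        = deriv (fun s => L (s, q θ, deriv q θ)) θ
          + ((1 - α) / (t - θ)) *
              ⟪gradient (fun v => L (θ, q θ, v)) (deriv q θ), deriv q θ⟫ := by
  intro θ hθ
  have hqI : ContDiffOn ℝ 2 q (Set.Ioo a t) := hq.mono Set.Ioo_subset_Icc_self
  have hq₁ : DifferentiableAt ℝ q θ :=
    (hqI.differentiableOn two_ne_zero).differentiableAt (isOpen_Ioo.mem_nhds hθ)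
  have hq₂ : DifferentiableAt ℝ (deriv q) θ :=
    ((hqI.deriv_of_isOpen isOpen_Ioo le_rfl).differentiableOn one_ne_zero).differentiableAt
      (isOpen_Ioo.mem_nhds hθ)
  have hp : DifferentiableAt ℝ (fun s => gradient (fun v => L (s, q s, v)) (deriv q s)) θ :=
    ((contDiff_gradient_slot₃ hL le_rfl).differentiable one_ne_zero _).comp θ
      (differentiableAt_id.prodMk (hq₁.prodMk hq₂))
  rw [(hasDerivAt_sub_inner_gradient_slot₃ (hL.differentiable two_ne_zero _) hq₁.hasDerivAt hq₂
    hp).deriv, hEL θ hθ, real_inner_smul_left]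

/-- **First-order DuBois-Reymond condition for FALVA problems.**
If `q` satisfies on `(a,t)` the FALVA Euler–Lagrange equation
`∂₂L - d/dθ ∂₃L = ((1-α)/(t-θ)) ∂₃L`, then on `(a,t)`:
`(d/dθ)[L(θ, q, q') - ⟨∂₃L(θ, q, q'), q'⟩]
  = ∂₁L(θ, q, q') + ((1-α)/(t-θ)) ⟨∂₃L(θ, q, q'), q'⟩`. -/
theorem falva_first_order_dubois_reymond
    (n : ℕ) (hn : 1 ≤ n) (a t α : ℝ) (hat : a < t) (hα0 : 0 < α) (hα1 : α ≤ 1)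
    (L : ℝ × EuclideanSpace ℝ (Fin n) × EuclideanSpace ℝ (Fin n) → ℝ)
    (hL : ContDiff ℝ 2 L)
    (q : ℝ → EuclideanSpace ℝ (Fin n))
    (hq : ContDiffOn ℝ 2 q (Set.Icc a t))
    (hEL : ∀ θ ∈ Set.Ioo a t,
      gradient (fun y => L (θ, y, deriv q θ)) (q θ)
          - deriv (fun s => gradient (fun v => L (s, q s, v)) (deriv q s)) θ
        = ((1 - α) / (t - θ)) • gradient (fun v => L (θ, q θ, v)) (deriv q θ)) :
    ∀ θ ∈ Set.Ioo a t,
      deriv (fun s =>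
          L (s, q s, deriv q s)
            - ⟪gradient (fun v => L (s, q s, v)) (deriv q s), deriv q s⟫) θ
        = deriv (fun s => L (s, q θ, deriv q θ)) θ
          + ((1 - α) / (t - θ)) *
              ⟪gradient (fun v => L (θ, q θ, v)) (deriv q θ), deriv q θ⟫ :=
  falva_first_order_dubois_reymond_general n a t α L hL q hq hEL
end

section
/- Let n, r ≥ 1, let a < t be real numbers, let 0 < α ≤ 1, let L : ℝ × ℝⁿ × ℝʳ → ℝ and φ : ℝ × ℝⁿ × ℝʳ → ℝⁿ be of class C¹, and define H(θ, q, u, p) = L(θ, q, u)·(t−θ)^{α−1} + ⟨p, φ(θ, q, u)⟩ for θ ∈ (a,t). Let q, p : ℝ → ℝⁿ and u : ℝ → ℝʳ be of class C¹ and suppose that for all θ ∈ (a,t): q'(θ) = ∂₄H(θ, q(θ), u(θ), p(θ)), p'(θ) = −∂₂H(θ, q(θ), u(θ), p(θ)), and ∂₃H(θ, q(θ), u(θ), p(θ)) = 0. Then for all θ ∈ (a,t): (d/dθ) [H(θ, q(θ), u(θ), p(θ))] = ∂₁H(θ, q(θ), u(θ), p(θ)). -/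
open scoped RealInnerProductSpace

/-!
By the chain rule, the derivative of `θ ↦ H(θ, q θ, u θ, p θ)` is
`∂₁H + ⟪∇ₓH, q'⟫ + ⟪∇ᵤH, u'⟫ + ⟪∇ₚH, p'⟫`. Along an extremal `∇ᵤH = 0`, `∇ₚH = q'` and
`∇ₓH = -p'`, so the two remaining inner products are `-⟪p', q'⟫` and `⟪q', p'⟫`, which cancel.
-/

def uncurry₄ {α β γ δ ε : Type*} (f : α → β → γ → δ → ε) (z : α × β × γ × δ) : ε :=
  f z.1 z.2.1 z.2.2.1 z.2.2.2

section PartialDerivatives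

variable {E U F : Type*} [NormedAddCommGroup E] [NormedSpace ℝ E] [NormedAddCommGroup U]
  [NormedSpace ℝ U] [NormedAddCommGroup F] [NormedSpace ℝ F] {H : ℝ → E → U → F → ℝ}
  {θ : ℝ} {x : E} {v : U} {y : F}

theorem deriv_partial₁_eq_fderiv_uncurry₄ (hH : DifferentiableAt ℝ (uncurry₄ H) (θ, x, v, y)) :
    deriv (fun s => H s x v y) θ = fderiv ℝ (uncurry₄ H) (θ, x, v, y) (1, 0, 0, 0) :=
  (hH.hasFDerivAt.comp_hasDerivAt (f := fun s => (s, x, v, y)) θ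
    ((hasDerivAt_id θ).prodMk (hasDerivAt_const θ (x, v, y)))).deriv

theorem fderiv_partial₂_apply_eq_fderiv_uncurry₄
    (hH : DifferentiableAt ℝ (uncurry₄ H) (θ, x, v, y)) (h : E) :
    fderiv ℝ (fun x' => H θ x' v y) x h = fderiv ℝ (uncurry₄ H) (θ, x, v, y) (0, h, 0, 0) := by
  have hι := (hasFDerivAt_prodMk_right θ (x, v, y)).comp x
    (hasFDerivAt_prodMk_left (𝕜 := ℝ) x (v, y))
  exact DFunLike.congr_fun (hH.hasFDerivAt.comp x hι).fderiv h

theorem fderiv_partial₃_apply_eq_fderiv_uncurry₄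
    (hH : DifferentiableAt ℝ (uncurry₄ H) (θ, x, v, y)) (h : U) :
    fderiv ℝ (fun v' => H θ x v' y) v h = fderiv ℝ (uncurry₄ H) (θ, x, v, y) (0, 0, h, 0) := by
  have hι := (hasFDerivAt_prodMk_right θ (x, v, y)).comp v
    ((hasFDerivAt_prodMk_right x (v, y)).comp v (hasFDerivAt_prodMk_left (𝕜 := ℝ) v y))
  exact DFunLike.congr_fun (hH.hasFDerivAt.comp v hι).fderiv h

theorem fderiv_partial₄_apply_eq_fderiv_uncurry₄
    (hH : DifferentiableAt ℝ (uncurry₄ H) (θ, x, v, y)) (h : F) :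
    fderiv ℝ (fun y' => H θ x v y') y h = fderiv ℝ (uncurry₄ H) (θ, x, v, y) (0, 0, 0, h) := by
  have hι := (hasFDerivAt_prodMk_right θ (x, v, y)).comp y
    ((hasFDerivAt_prodMk_right x (v, y)).comp y (hasFDerivAt_prodMk_right (𝕜 := ℝ) v y))
  exact DFunLike.congr_fun (hH.hasFDerivAt.comp y hι).fderiv h

theorem deriv_comp_curve_eq_sum_partials {q : ℝ → E} {u : ℝ → U} {p : ℝ → F}
    (hH : DifferentiableAt ℝ (uncurry₄ H) (θ, q θ, u θ, p θ)) (hq : DifferentiableAt ℝ q θ)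
    (hu : DifferentiableAt ℝ u θ) (hp : DifferentiableAt ℝ p θ) :
    deriv (fun s => H s (q s) (u s) (p s)) θ =
      deriv (fun s => H s (q θ) (u θ) (p θ)) θ
        + fderiv ℝ (fun x => H θ x (u θ) (p θ)) (q θ) (deriv q θ)
        + fderiv ℝ (fun v => H θ (q θ) v (p θ)) (u θ) (deriv u θ)
        + fderiv ℝ (fun y => H θ (q θ) (u θ) y) (p θ) (deriv p θ) := by
  have hcurve : HasDerivAt (fun s => (s, q s, u s, p s)) (1, deriv q θ, deriv u θ, deriv p θ) θ :=
    (hasDerivAt_id θ).prodMk (hq.hasDerivAt.prodMk (hu.hasDerivAt.prodMk hp.hasDerivAt))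
  have hsplit : ((1 : ℝ), deriv q θ, deriv u θ, deriv p θ) = (1, 0, 0, 0) + (0, deriv q θ, 0, 0)
      + (0, 0, deriv u θ, 0) + (0, 0, 0, deriv p θ) := by
    simp
  rw [deriv_partial₁_eq_fderiv_uncurry₄ hH, fderiv_partial₂_apply_eq_fderiv_uncurry₄ hH,
    fderiv_partial₃_apply_eq_fderiv_uncurry₄ hH, fderiv_partial₄_apply_eq_fderiv_uncurry₄ hH,
    ← map_add, ← map_add, ← map_add, ← hsplit]
  exact (hH.hasFDerivAt.comp_hasDerivAt θ hcurve).deriv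

end PartialDerivatives

theorem deriv_hamiltonian_along_extremal_eq_deriv_time {E U : Type*} [NormedAddCommGroup E]
    [InnerProductSpace ℝ E] [CompleteSpace E] [NormedAddCommGroup U] [InnerProductSpace ℝ U]
    [CompleteSpace U] {H : ℝ → E → U → E → ℝ} {q p : ℝ → E} {u : ℝ → U} {θ : ℝ}
    (hH : DifferentiableAt ℝ (uncurry₄ H) (θ, q θ, u θ, p θ)) (hq : DifferentiableAt ℝ q θ)
    (hu : DifferentiableAt ℝ u θ) (hp : DifferentiableAt ℝ p θ)
    (hq' : deriv q θ = gradient (fun y => H θ (q θ) (u θ) y) (p θ))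
    (hp' : deriv p θ = -gradient (fun x => H θ x (u θ) (p θ)) (q θ))
    (hu' : gradient (fun v => H θ (q θ) v (p θ)) (u θ) = 0) :
    deriv (fun s => H s (q s) (u s) (p s)) θ = deriv (fun s => H s (q θ) (u θ) (p θ)) θ := by
  rw [deriv_comp_curve_eq_sum_partials hH hq hu hp, ← inner_gradient_left, ← inner_gradient_left,
    ← inner_gradient_left, hu', hp', ← hq', inner_zero_left, inner_neg_right, real_inner_comm]
  ring

theorem falva_pontryagin_extremal_hamiltonian_deriv_general
    (n r : ℕ) (a t α : ℝ)
    (L : ℝ × EuclideanSpace ℝ (Fin n) × EuclideanSpace ℝ (Fin r) → ℝ)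
    (φ : ℝ × EuclideanSpace ℝ (Fin n) × EuclideanSpace ℝ (Fin r) →
      EuclideanSpace ℝ (Fin n))
    (hL : ContDiff ℝ 1 L) (hφ : ContDiff ℝ 1 φ)
    (H : ℝ → EuclideanSpace ℝ (Fin n) → EuclideanSpace ℝ (Fin r) →
      EuclideanSpace ℝ (Fin n) → ℝ)
    (hH : ∀ θ x u p, H θ x u p = L (θ, x, u) * (t - θ) ^ (α - 1) + ⟪p, φ (θ, x, u)⟫)
    (q p : ℝ → EuclideanSpace ℝ (Fin n)) (u : ℝ → EuclideanSpace ℝ (Fin r))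
    (hq : ContDiff ℝ 1 q) (hp : ContDiff ℝ 1 p) (hu : ContDiff ℝ 1 u)
    (hsys : ∀ θ ∈ Set.Ioo a t,
      deriv q θ = gradient (fun pp => H θ (q θ) (u θ) pp) (p θ)
        ∧ deriv p θ = - gradient (fun x => H θ x (u θ) (p θ)) (q θ)
        ∧ gradient (fun v => H θ (q θ) v (p θ)) (u θ) = 0) :
    ∀ θ ∈ Set.Ioo a t,
      deriv (fun s => H s (q s) (u s) (p s)) θ
        = deriv (fun s => H s (q θ) (u θ) (p θ)) θ := by
  intro θ hθ
  obtain ⟨hq', hp', hu'⟩ := hsys θ hθ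
  have hdiff : DifferentiableAt ℝ (uncurry₄ H) (θ, q θ, u θ, p θ) := by
    have hLd := hL.differentiable one_ne_zero
    have hφd := hφ.differentiable one_ne_zero
    have hθt : t - θ ≠ 0 := (sub_pos.mpr hθ.2).ne'
    rw [show uncurry₄ H = fun z => L (z.1, z.2.1, z.2.2.1) * (t - z.1) ^ (α - 1)
        + ⟪z.2.2.2, φ (z.1, z.2.1, z.2.2.1)⟫ from funext fun z => hH _ _ _ _]
    exact DifferentiableAt.add (by fun_prop (disch := exact hθt))
      (differentiableAt_snd.snd.snd.inner ℝ (by fun_prop))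
  exact deriv_hamiltonian_along_extremal_eq_deriv_time hdiff (hq.differentiable one_ne_zero θ)
    (hu.differentiable one_ne_zero θ) (hp.differentiable one_ne_zero θ) hq' hp' hu'

/-- **DuBois-Reymond condition along Pontryagin FALVA extremals.**
With Hamiltonian `H(θ,x,u,p) = L(θ,x,u)(t-θ)^(α-1) + ⟨p, φ(θ,x,u)⟩`, along any
Pontryagin FALVA extremal (i.e. `q' = ∂₄H`, `p' = -∂₂H`, `∂₃H = 0` on `(a,t)`)
one has `(d/dθ) H(θ, q(θ), u(θ), p(θ)) = ∂₁H(θ, q(θ), u(θ), p(θ))` on `(a,t)`. -/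
theorem falva_pontryagin_extremal_hamiltonian_deriv
    (n r : ℕ) (hn : 1 ≤ n) (hr : 1 ≤ r) (a t α : ℝ) (hat : a < t)
    (hα0 : 0 < α) (hα1 : α ≤ 1)
    (L : ℝ × EuclideanSpace ℝ (Fin n) × EuclideanSpace ℝ (Fin r) → ℝ)
    (φ : ℝ × EuclideanSpace ℝ (Fin n) × EuclideanSpace ℝ (Fin r) →
      EuclideanSpace ℝ (Fin n))
    (hL : ContDiff ℝ 1 L) (hφ : ContDiff ℝ 1 φ)
    (H : ℝ → EuclideanSpace ℝ (Fin n) → EuclideanSpace ℝ (Fin r) →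
      EuclideanSpace ℝ (Fin n) → ℝ)
    (hH : ∀ θ x u p, H θ x u p = L (θ, x, u) * (t - θ) ^ (α - 1) + ⟪p, φ (θ, x, u)⟫)
    (q p : ℝ → EuclideanSpace ℝ (Fin n)) (u : ℝ → EuclideanSpace ℝ (Fin r))
    (hq : ContDiff ℝ 1 q) (hp : ContDiff ℝ 1 p) (hu : ContDiff ℝ 1 u)
    (hsys : ∀ θ ∈ Set.Ioo a t,
      deriv q θ = gradient (fun pp => H θ (q θ) (u θ) pp) (p θ)
        ∧ deriv p θ = - gradient (fun x => H θ x (u θ) (p θ)) (q θ)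
        ∧ gradient (fun v => H θ (q θ) v (p θ)) (u θ) = 0) :
    ∀ θ ∈ Set.Ioo a t,
      deriv (fun s => H s (q s) (u s) (p s)) θ
        = deriv (fun s => H s (q θ) (u θ) (p θ)) θ :=
  falva_pontryagin_extremal_hamiltonian_deriv_general n r a t α L φ hL hφ H hH q p u hq hp hu hsys
end
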